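/- arXiv:1307.1961 — 5 statements merged into one kernel-verified Lean document; each statement's English description precedes it below -/
import Mathlib

section
/- Let C be an optimal (r,δ)_a linear code of length n and dimension k over the finite field F_q (with 1 ≤ r ≤ k and δ ≥ 2). Then n·r ≥ k·(r+δ-1), i.e., n/(r+δ-1) ≥ k/r. -/
/-- The Hamming weight of a vector. -/
def hWt {F : Type} [Field F] [DecidableEq F] {ι : Type} [Fintype ι] (c : ι → F) : ℕ :=
  (Finset.univ.filter fun i => c i ≠ 0).card

/-- `d` is the minimum Hamming distance of the linear code `C`. -/
def IsMinDist {F : Type} [Field F] [DecidableEq F] {ι : Type} [Fintype ι]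
    (C : Submodule F (ι → F)) (d : ℕ) : Prop :=
  IsLeast {w : ℕ | ∃ c ∈ C, c ≠ 0 ∧ hWt c = w} d

/-- The punctured code `C|_S` has minimum distance at least `δ`. -/
def PuncturedDistGE {F : Type} [Field F] [DecidableEq F] {n : ℕ}
    (C : Submodule F (Fin n → F)) (S : Finset (Fin n)) (δ : ℕ) : Prop :=
  ∀ c ∈ C, (∃ i ∈ S, c i ≠ 0) → δ ≤ (S.filter fun i => c i ≠ 0).card

/-- `C` has all-symbol `(r,δ)` locality. -/
def IsLRC {F : Type} [Field F] [DecidableEq F] {n : ℕ}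
    (C : Submodule F (Fin n → F)) (r δ : ℕ) : Prop :=
  ∀ i : Fin n, ∃ S : Finset (Fin n), i ∈ S ∧ S.card ≤ r + δ - 1 ∧ PuncturedDistGE C S δ

/-- `C` is an optimal `(r,δ)_a` linear code of length `n` and dimension `k`:
it has dimension `k`, all-symbol `(r,δ)` locality, and its minimum distance equals
`n - k + 1 - (⌈k/r⌉ - 1)(δ - 1)`. -/
def IsOptimalLRC {F : Type} [Field F] [DecidableEq F] {n : ℕ}
    (C : Submodule F (Fin n → F)) (k r δ : ℕ) : Prop :=
  Module.finrank F ↥C = k ∧ IsLRC C r δ ∧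
  ∃ d : ℕ, IsMinDist C d ∧
    (d : ℤ) = (n : ℤ) - (k : ℤ) + 1 - ((((k + r - 1) / r : ℕ) : ℤ) - 1) * ((δ : ℤ) - 1)

lemma ceil_mul_le (k r : ℕ) (hr : 0 < r) : k ≤ r * ((k + r - 1) / r) := by
  have hdm := Nat.div_add_mod (k + r - 1) r
  have hmod := Nat.mod_lt (k + r - 1) hr
  omega

/-- an optimal `(r,δ)_a` linear code satisfies `n·r ≥ k·(r+δ-1)`,
i.e. `n/(r+δ-1) ≥ k/r`. -/
theorem statement1 {F : Type} [Field F] [Fintype F] [DecidableEq F]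
    {n k r δ : ℕ} (hk1 : 1 ≤ k) (hkn : k ≤ n) (hr1 : 1 ≤ r) (hrk : r ≤ k) (hδ : 2 ≤ δ)
    (C : Submodule F (Fin n → F)) (hopt : IsOptimalLRC C k r δ) :
    k * (r + δ - 1) ≤ n * r := by
  obtain ⟨hfr, hlrc, d, hmin, hd⟩ := hopt
  obtain ⟨c, hcC, hc0, hwt⟩ := hmin.1
  have hex : ∃ i, c i ≠ 0 := by
    by_contra h
    push_neg at h
    exact hc0 (funext fun i => h i)
  obtain ⟨i, hi⟩ := hex
  obtain ⟨S, hiS, hScard, hSd⟩ := hlrc i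
  have hδd : δ ≤ d := by
    have h1 := hSd c hcC ⟨i, hiS, hi⟩
    have h2 : (S.filter fun j => c j ≠ 0).card ≤ hWt c := by
      apply Finset.card_le_card
      intro j hj
      simp only [hWt, Finset.mem_filter, Finset.mem_univ, true_and]
      exact (Finset.mem_filter.mp hj).2
    omega
  set m := (k + r - 1) / r with hm
  have hkm : k ≤ r * m := ceil_mul_le k r (by omega)
  have hδd' : (δ : ℤ) ≤ d := by exact_mod_cast hδd
  have hid : (m : ℤ) * ((δ : ℤ) - 1) = ((m : ℤ) - 1) * ((δ : ℤ) - 1) + ((δ : ℤ) - 1) := by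
    ring
  have h1 : (k : ℤ) + (m : ℤ) * ((δ : ℤ) - 1) ≤ n := by linarith [hd]
  have hrm : (k : ℤ) ≤ (r : ℤ) * m := by exact_mod_cast hkm
  have hr0 : (0 : ℤ) ≤ (r : ℤ) := by positivity
  have hδ1 : (0 : ℤ) ≤ (δ : ℤ) - 1 := by
    have : (2 : ℤ) ≤ δ := by exact_mod_cast hδ
    linarith
  have h2 : ((k : ℤ) + (m : ℤ) * ((δ : ℤ) - 1)) * r ≤ (n : ℤ) * r :=
    mul_le_mul_of_nonneg_right h1 hr0
  have h3 : (k : ℤ) * ((δ : ℤ) - 1) ≤ ((r : ℤ) * m) * ((δ : ℤ) - 1) :=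
    mul_le_mul_of_nonneg_right hrm hδ1
  zify [show 1 ≤ r + δ by omega]
  nlinarith [h2, h3]
end

section
/- Let n, k, r, δ be integers with n ≥ k ≥ 1, 1 ≤ r ≤ k, δ ≥ 2. Let S = {S_1,...,S_t} be a partition of [n] = {1,...,n} with δ ≤ |S_i| ≤ r+δ−1 for every i ∈ [t]. Suppose t ≥ ⌈k/r⌉ and that for every subset J ⊆ [t] with |J| = ⌈k/r⌉ one has |∪_{i∈J} S_i| ≥ k + ⌈k/r⌉(δ−1). Then for every prime power q with q ≥ C(n, k−1) (the binomial coefficient n choose k−1), there exists an optimal (r,δ)_a linear code of length n and dimension k over F_q. -/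
/-!
Each group `S l` is split into `b l = #(S l) - (δ - 1)` positions `T l` and the rest. The columns
`g : Fin n → F^k` of a generator matrix are chosen one at a time so that (i) the columns of any
`E` with `#E ≤ k` and `#(E ∩ S l) ≤ b l` for all `l` are independent, and (ii) the columns of
`S l` lie in the span of those of `T l`. A new column only has to avoid the spans of at most
`C(n - 1, k - 1) < q` sets of `k - 1` columns, and a subspace is never covered by fewer than `q`
subspaces not containing it. By (i) and (ii) every group carries an MDS code of dimension `b l`,
which gives `(r, δ)`-locality. A nonzero codeword vanishes on no independent `k`-set, so it has
more than `b l` zeros in fewer than `⌈k/r⌉` groups, bounding its zeros by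
`k - 1 + (⌈k/r⌉ - 1)(δ - 1)`; a linear form killing `⌈k/r⌉ - 1` whole groups and a few more
positions attains the bound.
-/

open Finset Submodule Function Module

section LinearAlgebra

variable {K M ι : Type*} [Field K] [AddCommGroup M] [Module K M]

theorem Submodule.exists_mem_forall_notMem_of_card_lt (W : Submodule K M) (s : Finset ι)
    (p : ι → Submodule K M) (hp : ∀ i ∈ s, ¬ W ≤ p i) (hs : #s < ENat.card K) :
    ∃ x ∈ W, ∀ i ∈ s, x ∉ p i := by
  have hne (i : s) : (p i).comap W.subtype ≠ ⊤ := by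
    rw [Ne, comap_subtype_eq_top]
    exact hp i i.2
  obtain ⟨⟨x, hxW⟩, -, hx⟩ := Set.exists_of_ssubset
    (iUnion_ssubset_of_forall_ne_top_of_card_lt univ _ hne (by simpa using hs))
  refine ⟨x, hxW, fun i hi hxi => hx ?_⟩
  simp only [Set.mem_iUnion]
  exact ⟨⟨i, hi⟩, mem_univ _, hxi⟩

theorem finrank_span_image_finset_le_card (g : ι → M) (E : Finset ι) :
    finrank K (span K (g '' E)) ≤ #E := by
  classical
  have := finrank_span_finset_le_card (R := K) (E.image g)
  rw [coe_image] at this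
  exact this.trans card_image_le

variable {g : ι → M}

theorem LinearIndepOn.finrank_span_image_eq_card {E : Finset ι} (h : LinearIndepOn K g E) :
    finrank K (span K (g '' E)) = #E := by
  rw [Set.image_eq_range, finrank_span_eq_card h]
  simp

theorem LinearIndepOn.span_image_eq_top [FiniteDimensional K M] {E : Finset ι}
    (h : LinearIndepOn K g E) (hE : #E = finrank K M) : span K (g '' E) = ⊤ :=
  eq_top_of_finrank_eq (h.finrank_span_image_eq_card.trans hE)

variable [DecidableEq ι] {s t : Set ι} {j : ι} {v : M}

theorem LinearIndepOn.update_of_notMem (hs : LinearIndepOn K g s) (hj : j ∉ s) :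
    LinearIndepOn K (update g j v) s :=
  hs.congr fun _ hx => (update_of_ne (ne_of_mem_of_not_mem hx hj) _ _).symm

theorem LinearIndepOn.update_insert (hs : LinearIndepOn K g s) (hst : s ⊆ t) (hjt : j ∉ t)
    (hv : v ∉ span K (g '' t)) : LinearIndepOn K (update g j v) (insert j s) := by
  have hjs : j ∉ s := fun h => hjt (hst h)
  have heq : Set.EqOn g (update g j v) s :=
    fun _ hx => (update_of_ne (ne_of_mem_of_not_mem hx hjs) _ _).symm
  rw [linearIndepOn_insert hjs, update_self, ← heq.image_eq]
  exact ⟨hs.congr heq, fun h => hv (span_mono (Set.image_mono hst) h)⟩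

end LinearAlgebra

section GeneratedCode

variable (K : Type*) {V ι : Type*} [Field K] [AddCommGroup V] [Module K V]

/-- The linear code with generator matrix columns `g j`. -/
def generatedCode (g : ι → V) : Submodule K (ι → K) :=
  LinearMap.range (LinearMap.pi fun j => Dual.eval K V (g j))

variable {K} {g : ι → V}

theorem mem_generatedCode {c : ι → K} :
    c ∈ generatedCode K g ↔ ∃ φ : Dual K V, (fun j => φ (g j)) = c := by
  simp [generatedCode, funext_iff]

theorem Module.Dual.eq_zero_of_span_image_eq_top {s : Set ι} {φ : Dual K V}
    (hs : span K (g '' s) = ⊤) (hφ : ∀ x ∈ s, φ (g x) = 0) : φ = 0 :=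
  LinearMap.ext_on hs (by rintro _ ⟨x, hx, rfl⟩; simp [hφ x hx])

theorem Module.Dual.exists_ne_zero_of_finrank_span_lt [FiniteDimensional K V] {s : Set ι}
    (hs : finrank K (span K (g '' s)) < finrank K V) :
    ∃ φ : Dual K V, φ ≠ 0 ∧ ∀ x ∈ s, φ (g x) = 0 := by
  obtain ⟨φ, hφ, hker⟩ := (span K (g '' s)).exists_le_ker_of_lt_top
    (lt_top_of_finrank_lt_finrank hs)
  exact ⟨φ, hφ, fun x hx => hker (subset_span (Set.mem_image_of_mem g hx))⟩

theorem finrank_generatedCode [FiniteDimensional K V] (hg : span K (Set.range g) = ⊤) :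
    finrank K (generatedCode K g) = finrank K V := by
  have hinj : Function.Injective (LinearMap.pi fun j => Dual.eval K V (g j)) := by
    rw [← LinearMap.ker_eq_bot, LinearMap.ker_eq_bot']
    intro φ hφ
    refine Dual.eq_zero_of_span_image_eq_top (s := Set.univ) (by rwa [Set.image_univ]) ?_
    intro x _
    exact congrFun hφ x
  rw [generatedCode, LinearMap.finrank_range_of_inj hinj, Subspace.dual_finrank_eq]

end GeneratedCode

section Partition

variable {ι κ : Type*} {S : κ → Finset ι}

theorem eq_of_mem_of_pairwiseDisjoint (hS : Pairwise (Disjoint on S)) {x : ι} {i l : κ}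
    (hi : x ∈ S i) (hl : x ∈ S l) : i = l :=
  by_contra fun h => disjoint_left.mp (hS h) hi hl

theorem sum_card_eq_sum_card_add_card_mul {T : κ → Finset ι} {e : ℕ}
    (hSe : ∀ l, #(S l) = #(T l) + e) (J : Finset κ) :
    ∑ l ∈ J, #(S l) = ∑ l ∈ J, #(T l) + #J * e := by
  simp [hSe, sum_add_distrib]

theorem exists_subset_card_eq_add {e : ℕ} (h : ∀ l, e ≤ #(S l)) :
    ∃ T : κ → Finset ι, (∀ l, T l ⊆ S l) ∧ ∀ l, #(S l) = #(T l) + e := by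
  choose T hTS hT using fun l => exists_subset_card_eq (tsub_le_self : #(S l) - e ≤ #(S l))
  exact ⟨T, hTS, fun l => by have := h l; have := hT l; omega⟩

variable [DecidableEq ι]

def MeetsAtMost (S : κ → Finset ι) (c : κ → ℕ) (E : Finset ι) : Prop :=
  ∀ l, #(E ∩ S l) ≤ c l

theorem MeetsAtMost.mono {c : κ → ℕ} {E E' : Finset ι} (h : MeetsAtMost S c E') (hE : E ⊆ E') :
    MeetsAtMost S c E :=
  fun l => (card_le_card (inter_subset_inter_right hE)).trans (h l)

theorem meetsAtMost_of_subset (hS : Pairwise (Disjoint on S)) {c : κ → ℕ} {E : Finset ι} {i : κ}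
    (hE : E ⊆ S i) (hc : #E ≤ c i) : MeetsAtMost S c E := by
  intro l
  rcases eq_or_ne l i with rfl | hl
  · exact (card_le_card inter_subset_left).trans hc
  · rw [disjoint_iff_inter_eq_empty.mp ((hS hl.symm).mono_left hE)]
    exact Nat.zero_le _

theorem MeetsAtMost.insert_of_mem_same (hS : Pairwise (Disjoint on S)) {c : κ → ℕ}
    {E : Finset ι} {i : κ} {x j : ι} (hx : x ∈ S i) (hj : j ∈ S i) (hxE : x ∉ E) (hjE : j ∉ E)
    (h : MeetsAtMost S c (insert j E)) : MeetsAtMost S c (insert x E) := by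
  intro l
  rcases eq_or_ne l i with rfl | hl
  · have := h l
    rwa [insert_inter_of_mem hj, card_insert_of_notMem fun h => hjE (mem_inter.mp h).1,
      ← card_insert_of_notMem fun h => hxE (mem_inter.mp h).1, ← insert_inter_of_mem hx] at this
  · rw [insert_inter_of_notMem fun h => disjoint_left.mp (hS hl.symm) hx h]
    exact (card_le_card (inter_subset_inter_right (subset_insert j E))).trans (h l)

theorem card_eq_sum_card_inter [Fintype κ] (hS : Pairwise (Disjoint on S))
    (hcover : ∀ x, ∃ l, x ∈ S l) (E : Finset ι) : #E = ∑ l, #(E ∩ S l) := by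
  have hE : E = univ.biUnion fun l => E ∩ S l := by
    ext x
    obtain ⟨l, hl⟩ := hcover x
    simp only [mem_biUnion, mem_univ, mem_inter, true_and]
    exact ⟨fun hx => ⟨l, hx, hl⟩, fun ⟨_, hx, _⟩ => hx⟩
  conv_lhs => rw [hE]
  exact card_biUnion fun i _ l _ hil =>
    ((hS hil).mono inter_subset_right inter_subset_right)

theorem exists_subsuperset_card_eq_meetsAtMost [Fintype κ] (hS : Pairwise (Disjoint on S))
    (hcover : ∀ x, ∃ l, x ∈ S l) {c : κ → ℕ} {E A : Finset ι} (hEA : E ⊆ A)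
    (hE : MeetsAtMost S c E) {τ : ℕ} (hEτ : #E ≤ τ) (hτ : τ ≤ ∑ l, min (c l) #(A ∩ S l)) :
    ∃ E', E ⊆ E' ∧ E' ⊆ A ∧ #E' = τ ∧ MeetsAtMost S c E' := by
  choose R hER hRA hR using fun l => exists_subsuperset_card_eq (inter_subset_inter_right hEA)
    (le_min (hE l) (card_le_card (inter_subset_inter_right hEA))) (min_le_right (c l) #(A ∩ S l))
  have hRS (l : κ) : R l ⊆ S l := (hRA l).trans inter_subset_right
  have hRcard : #(univ.biUnion R) = ∑ l, min (c l) #(A ∩ S l) := by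
    rw [card_biUnion fun i _ l _ hil => (hS hil).mono (hRS i) (hRS l)]
    exact sum_congr rfl fun l _ => hR l
  have hER' : E ⊆ univ.biUnion R := by
    intro x hx
    obtain ⟨l, hl⟩ := hcover x
    exact mem_biUnion.mpr ⟨l, mem_univ l, hER l (mem_inter.mpr ⟨hx, hl⟩)⟩
  obtain ⟨E', hEE', hE'R, hE'⟩ := exists_subsuperset_card_eq hER' hEτ (hRcard ▸ hτ)
  refine ⟨E', hEE', fun x hx => ?_, hE', fun l => ?_⟩
  · obtain ⟨l, -, hxl⟩ := mem_biUnion.mp (hE'R hx)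
    exact (mem_inter.mp (hRA l hxl)).1
  · calc #(E' ∩ S l) ≤ #(R l) := card_le_card fun x hx => by
          obtain ⟨l', -, hxl'⟩ := mem_biUnion.mp (hE'R (mem_inter.mp hx).1)
          exact eq_of_mem_of_pairwiseDisjoint hS (hRS l' hxl') (mem_inter.mp hx).2 ▸ hxl'
      _ ≤ c l := (hR l).symm ▸ min_le_left _ _

theorem sum_min_card_inter_eq [Fintype κ] {T : κ → Finset ι} {A : Finset ι}
    (hTS : ∀ l, T l ⊆ S l) (hTA : ∀ l, T l ⊆ A) :
    ∑ l, min #(T l) #(A ∩ S l) = ∑ l, #(T l) :=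
  sum_congr rfl fun l _ => min_eq_left (card_le_card (subset_inter (hTA l) (hTS l)))

theorem le_sum_card_of_add_mul_le_card_biUnion (hS : Pairwise (Disjoint on S))
    {T : κ → Finset ι} {e k : ℕ} (hSe : ∀ l, #(S l) = #(T l) + e) {J : Finset κ}
    (h : k + #J * e ≤ #(J.biUnion S)) : k ≤ ∑ l ∈ J, #(T l) := by
  rw [card_biUnion fun i _ l _ hil => hS hil, sum_card_eq_sum_card_add_card_mul hSe] at h
  omega

/-- Groups holding more than `b l` points of `Z` contribute at most `b l + e` each, and fewer than
`m` of them occur. -/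
theorem card_le_of_sum_min_card_inter_lt [Fintype κ] (hS : Pairwise (Disjoint on S))
    (hcover : ∀ x, ∃ l, x ∈ S l) {b : κ → ℕ} {e m k : ℕ} (hSb : ∀ l, #(S l) = b l + e)
    (hJ : ∀ J : Finset κ, #J = m → k ≤ ∑ l ∈ J, b l) {Z : Finset ι}
    (hZ : ∑ l, min (b l) #(Z ∩ S l) < k) : #Z ≤ k - 1 + (m - 1) * e := by
  classical
  set O := univ.filter fun l => b l < #(Z ∩ S l)
  have hO : #O ≤ m - 1 := by
    by_contra! h
    obtain ⟨J, hJO, hJm⟩ := exists_subset_card_eq (show m ≤ #O by omega)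
    have hJb : ∑ l ∈ J, b l ≤ ∑ l, min (b l) #(Z ∩ S l) := calc
      ∑ l ∈ J, b l = ∑ l ∈ J, min (b l) #(Z ∩ S l) :=
          sum_congr rfl fun l hl => (min_eq_left (mem_filter.mp (hJO hl)).2.le).symm
      _ ≤ _ := sum_le_sum_of_subset (subset_univ J)
    have := hJ J hJm
    omega
  calc #Z = ∑ l, #(Z ∩ S l) := card_eq_sum_card_inter hS hcover Z
    _ ≤ ∑ l, (min (b l) #(Z ∩ S l) + if l ∈ O then e else 0) := sum_le_sum fun l _ => by
        have := card_le_card (inter_subset_right : Z ∩ S l ⊆ S l)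
        have := hSb l
        by_cases hl : l ∈ O <;> simp only [hl, if_true, if_false] <;> simp [O] at hl <;> omega
    _ = ∑ l, min (b l) #(Z ∩ S l) + #O * e := by
        rw [sum_add_distrib, sum_ite_mem, univ_inter, sum_const, smul_eq_mul]
    _ ≤ k - 1 + (m - 1) * e := add_le_add (by omega) (Nat.mul_le_mul_right e hO)

end Partition

theorem card_powersetCard_lt_of_notMem {ι : Type*} [Fintype ι] {D : Finset ι} {j : ι}
    (hjD : j ∉ D) {k q : ℕ} (hq : (Fintype.card ι - 1).choose k < q) : #(D.powersetCard k) < q := by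
  have := card_lt_univ_of_notMem hjD
  rw [card_powersetCard]
  exact (Nat.choose_le_choose k (by omega)).trans_lt hq

section Construction

variable {K V ι : Type*} [Field K] [AddCommGroup V] [Module K V] [DecidableEq ι] {g : ι → V}

theorem exists_mem_update_linearIndepOn_insert [Fintype K] (W : Submodule K V) (j : ι)
    {𝓔 : Finset (Finset ι)} (hj : ∀ E ∈ 𝓔, j ∉ E) (h𝓔 : #𝓔 < Fintype.card K)
    (hW : ∀ E ∈ 𝓔, ¬ W ≤ span K (g '' E)) :
    ∃ v ∈ W, ∀ E ∈ 𝓔, ∀ E' ⊆ E, LinearIndepOn K g (E' : Set ι) →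
      LinearIndepOn K (update g j v) (insert j (E' : Set ι)) := by
  obtain ⟨v, hvW, hv⟩ := W.exists_mem_forall_notMem_of_card_lt 𝓔 (fun E => span K (g '' E)) hW
    (by simpa [ENat.card_eq_coe_fintype_card] using h𝓔)
  exact ⟨v, hvW, fun E hE E' hE' h => h.update_insert (coe_subset.mpr hE') (hj E hE) (hv E hE)⟩

theorem exists_forall_linearIndepOn_of_card_le [Fintype K] [Fintype ι] (hV : 0 < finrank K V)
    (hq : (Fintype.card ι - 1).choose (finrank K V - 1) < Fintype.card K) :
    ∃ g : ι → V, ∀ E : Finset ι, #E ≤ finrank K V → LinearIndepOn K g E := by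
  set k := finrank K V
  suffices ∀ D : Finset ι, ∃ g : ι → V, ∀ E ⊆ D, #E ≤ k → LinearIndepOn K g E by
    obtain ⟨g, hg⟩ := this univ
    exact ⟨g, fun E => hg E (subset_univ E)⟩
  intro D
  induction D using Finset.induction_on with
  | empty => exact ⟨0, fun E hE _ => by simp [subset_empty.mp hE]⟩
  | insert j D hjD ih =>
    obtain ⟨g, hg⟩ := ih
    -- every set of at most `k - 1` old columns lies in one of `min #D (k - 1)` old columns
    set s := min #D (k - 1)
    have hcard : #(D.powersetCard s) < Fintype.card K := by
      rcases le_total #D (k - 1) with h | h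
      · simpa [s, min_eq_left h] using Fintype.one_lt_card
      · rw [show s = k - 1 from min_eq_right h]
        exact card_powersetCard_lt_of_notMem hjD hq
    have hW (E) (hE : E ∈ D.powersetCard s) : ¬ ⊤ ≤ span K (g '' E) := fun htop => by
      have := finrank_span_image_finset_le_card (K := K) g E
      rw [top_le_iff.mp htop, finrank_top] at this
      have := (mem_powersetCard.mp hE).2
      omega
    obtain ⟨v, -, hv⟩ := exists_mem_update_linearIndepOn_insert ⊤ j
      (fun E hE hjE => hjD ((mem_powersetCard.mp hE).1 hjE)) hcard hW
    refine ⟨update g j v, fun E hE hEk => ?_⟩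
    by_cases hjE : j ∈ E
    · have hED : E.erase j ⊆ D := subset_insert_iff.mp hE
      have hEs : #(E.erase j) ≤ s := by
        have := card_le_card hED
        rw [card_erase_of_mem hjE] at this ⊢
        omega
      obtain ⟨E'', hEE'', hE''D, hE''⟩ := exists_subsuperset_card_eq hED hEs (min_le_left _ _)
      rw [← insert_erase hjE, coe_insert]
      exact hv E'' (mem_powersetCard.mpr ⟨hE''D, hE''⟩) _ hEE''
        (hg _ hED (card_erase_le.trans hEk))
    · exact (hg E ((subset_insert_iff_of_notMem hjE).mp hE) hEk).update_of_notMem hjE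

variable {κ : Type*} {S T : κ → Finset ι}

variable (K) in
def IsGenericOn (S T : κ → Finset ι) (g : ι → V) (A : Finset ι) : Prop :=
  (∀ E ⊆ A, #E ≤ finrank K V → MeetsAtMost S (fun l => #(T l)) E → LinearIndepOn K g E) ∧
    ∀ l, ∀ x ∈ A ∩ S l, g x ∈ span K (g '' T l)

theorem IsGenericOn.not_span_le (hS : Pairwise (Disjoint on S)) {A : Finset ι}
    (hg : IsGenericOn K S T g A) (hTA : ∀ l, T l ⊆ A) (hTS : ∀ l, T l ⊆ S l) {i : κ} {j : ι}
    (hji : j ∈ S i) (hjA : j ∉ A) {E : Finset ι} (hEA : E ⊆ A) (hE : #E < finrank K V)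
    (hEj : MeetsAtMost S (fun l => #(T l)) (insert j E)) :
    ¬ span K (g '' T i) ≤ span K (g '' E) := by
  obtain ⟨x, hxT, hxE⟩ : ∃ x ∈ T i, x ∉ E := by
    by_contra! h
    have h1 := card_le_card fun x hx => mem_inter.mpr ⟨h x hx, hTS i hx⟩
    have h2 := hEj i
    dsimp only at h2
    rw [insert_inter_of_mem hji, card_insert_of_notMem fun h => hjA (hEA (mem_inter.mp h).1)]
      at h2
    omega
  have hind := hg.1 (insert x E) (insert_subset (hTA i hxT) hEA)
    (by rw [card_insert_of_notMem hxE]; omega)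
    (hEj.insert_of_mem_same hS (hTS i hxT) hji hxE fun h => hjA (hEA h))
  rw [coe_insert] at hind
  exact fun hle => hind.notMem_span_of_insert hxE (hle (subset_span (Set.mem_image_of_mem g hxT)))

theorem IsGenericOn.mem_span_update (hS : Pairwise (Disjoint on S)) {A : Finset ι}
    (hg : IsGenericOn K S T g A) (hTA : ∀ l, T l ⊆ A) {i : κ} {j : ι} (hji : j ∈ S i)
    (hjA : j ∉ A) {v : V} (hv : v ∈ span K (g '' T i)) :
    ∀ l, ∀ x ∈ insert j A ∩ S l, update g j v x ∈ span K (update g j v '' T l) := by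
  intro l x hx
  have himg : update g j v '' T l = g '' T l :=
    Set.image_congr fun y hy => update_of_ne (ne_of_mem_of_not_mem (hTA l hy) hjA) _ _
  rw [himg]
  obtain ⟨hxA, hxS⟩ := mem_inter.mp hx
  rcases mem_insert.mp hxA with rfl | hxA
  · rwa [update_self, eq_of_mem_of_pairwiseDisjoint hS hxS hji]
  · rw [update_of_ne (ne_of_mem_of_not_mem hxA hjA)]
    exact hg.2 l x (mem_inter.mpr ⟨hxA, hxS⟩)

theorem IsGenericOn.exists_update_insert [Fintype K] [Fintype ι] [Fintype κ]
    (hS : Pairwise (Disjoint on S)) (hcover : ∀ x, ∃ l, x ∈ S l) (hTS : ∀ l, T l ⊆ S l)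
    (hV : 0 < finrank K V) (hTV : finrank K V ≤ ∑ l, #(T l))
    (hq : (Fintype.card ι - 1).choose (finrank K V - 1) < Fintype.card K) {A : Finset ι}
    (hg : IsGenericOn K S T g A) (hTA : ∀ l, T l ⊆ A) {j : ι} (hjA : j ∉ A) :
    ∃ v, IsGenericOn K S T (update g j v) (insert j A) := by
  classical
  set k := finrank K V
  obtain ⟨i, hji⟩ := hcover j
  set 𝓔 := (A.powersetCard (k - 1)).filter fun E => MeetsAtMost S (fun l => #(T l)) (insert j E)
  have hW (E) (hE : E ∈ 𝓔) : ¬ span K (g '' T i) ≤ span K (g '' E) := by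
    obtain ⟨hE, hEj⟩ := mem_filter.mp hE
    obtain ⟨hEA, hEk⟩ := mem_powersetCard.mp hE
    exact hg.not_span_le hS hTA hTS hji hjA hEA (by omega) hEj
  obtain ⟨v, hvW, hv⟩ := exists_mem_update_linearIndepOn_insert _ j
    (fun E hE hjE => hjA ((mem_powersetCard.mp (mem_filter.mp hE).1).1 hjE))
    ((card_filter_le _ _).trans_lt (card_powersetCard_lt_of_notMem hjA hq)) hW
  refine ⟨v, fun E hE hEk hEb => ?_, hg.mem_span_update hS hTA hji hjA hvW⟩
  by_cases hjE : j ∈ E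
  · have hroom : k ≤ ∑ l, min #(T l) #(insert j A ∩ S l) :=
      hTV.trans_eq (sum_min_card_inter_eq hTS fun l => (hTA l).trans (subset_insert j A)).symm
    obtain ⟨E₂, hEE₂, hE₂A, hE₂k, hE₂b⟩ :=
      exists_subsuperset_card_eq_meetsAtMost hS hcover hE hEb hEk hroom
    have hE₂𝓔 : E₂.erase j ∈ 𝓔 := by
      refine mem_filter.mpr ⟨mem_powersetCard.mpr ⟨subset_insert_iff.mp hE₂A, ?_⟩, ?_⟩
      · rw [card_erase_of_mem (hEE₂ hjE), hE₂k]
      · rwa [insert_erase (hEE₂ hjE)]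
    rw [← insert_erase hjE, coe_insert]
    exact hv _ hE₂𝓔 _ (erase_subset_erase j hEE₂)
      (hg.1 _ (subset_insert_iff.mp hE) (card_erase_le.trans hEk) (hEb.mono (erase_subset j E)))
  · exact (hg.1 E ((subset_insert_iff_of_notMem hjE).mp hE) hEk hEb).update_of_notMem hjE

theorem exists_isGenericOn_univ [Fintype K] [Fintype ι] [Fintype κ]
    (hS : Pairwise (Disjoint on S)) (hcover : ∀ x, ∃ l, x ∈ S l) (hTS : ∀ l, T l ⊆ S l)
    (hV : 0 < finrank K V) (hTV : finrank K V ≤ ∑ l, #(T l))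
    (hq : (Fintype.card ι - 1).choose (finrank K V - 1) < Fintype.card K) :
    ∃ g : ι → V, IsGenericOn K S T g univ := by
  set P := univ.biUnion T
  have hTP (l : κ) : T l ⊆ P := subset_biUnion_of_mem T (mem_univ l)
  suffices ∀ D : Finset ι, ∃ g : ι → V, IsGenericOn K S T g (P ∪ D) by
    obtain ⟨g, hg⟩ := this univ
    exact ⟨g, union_eq_right.mpr (subset_univ P) ▸ hg⟩
  intro D
  induction D using Finset.induction_on with
  | empty =>
    obtain ⟨g, hg⟩ := exists_forall_linearIndepOn_of_card_le (V := V) hV hq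
    refine ⟨g, fun E _ hEk _ => hg E hEk, fun l x hx => subset_span (Set.mem_image_of_mem g ?_)⟩
    obtain ⟨hxP, hxS⟩ := mem_inter.mp hx
    obtain ⟨l', -, hxT⟩ := mem_biUnion.mp (union_empty P ▸ hxP)
    rwa [eq_of_mem_of_pairwiseDisjoint hS (hTS l' hxT) hxS] at hxT
  | insert j D hjD ih =>
    obtain ⟨g, hg⟩ := ih
    rw [union_insert]
    by_cases hj : j ∈ P ∪ D
    · exact ⟨g, by rwa [insert_eq_of_mem hj]⟩
    · obtain ⟨v, hv⟩ := hg.exists_update_insert hS hcover hTS hV hTV hq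
        (fun l => (hTP l).trans subset_union_left) hj
      exact ⟨_, hv⟩

end Construction

section Properties

variable {K V ι : Type*} [Field K] [AddCommGroup V] [Module K V] [FiniteDimensional K V]
  {g : ι → V}

theorem Module.Dual.card_lt_card_add_card_filter_ne_zero [DecidableEq K] {G T : Finset ι}
    (hspan : ∀ x ∈ G, g x ∈ span K (g '' T)) (hind : ∀ E ⊆ G, #E = #T → LinearIndepOn K g E)
    {φ : Dual K V} (hφ : ∃ x ∈ G, φ (g x) ≠ 0) : #G < #T + #(G.filter fun x => φ (g x) ≠ 0) := by
  by_contra! h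
  obtain ⟨x, hxG, hx⟩ := hφ
  have hZ : #T ≤ #(G.filter fun x => φ (g x) = 0) := by
    have := card_filter_add_card_filter_not (s := G) fun x => φ (g x) = 0
    simp only [ne_eq] at h
    omega
  obtain ⟨Z, hZ, hZT⟩ := exists_subset_card_eq hZ
  have hZG : Z ⊆ G := hZ.trans (filter_subset _ _)
  -- `#T` independent zeros of the codeword already span all columns of `G`
  have heq : span K (g '' Z) = span K (g '' T) := by
    refine eq_of_le_of_finrank_le (span_le.mpr ?_) ?_
    · rintro _ ⟨z, hz, rfl⟩
      exact hspan z (hZG hz)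
    · rw [(hind Z hZG hZT).finrank_span_image_eq_card, hZT]
      exact finrank_span_image_finset_le_card g T
  have hker : span K (g '' Z) ≤ LinearMap.ker φ := by
    rw [span_le]
    rintro _ ⟨z, hz, rfl⟩
    exact (mem_filter.mp (hZ hz)).2
  exact hx (hker (heq ▸ hspan x hxG))

variable [DecidableEq ι] [Fintype ι] {κ : Type*} {S T : κ → Finset ι}

theorem IsGenericOn.span_range_eq_top [Fintype κ] (hS : Pairwise (Disjoint on S))
    (hcover : ∀ x, ∃ l, x ∈ S l) (hTS : ∀ l, T l ⊆ S l) (hTV : finrank K V ≤ ∑ l, #(T l))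
    (hg : IsGenericOn K S T g univ) :
    span K (Set.range g) = ⊤ := by
  obtain ⟨E, -, -, hE, hEb⟩ := exists_subsuperset_card_eq_meetsAtMost hS hcover
    (empty_subset univ) (fun l => by simp) (Nat.zero_le _)
    (hTV.trans_eq (sum_min_card_inter_eq hTS fun l => subset_univ (T l)).symm)
  rw [eq_top_iff, ← (hg.1 E (subset_univ E) hE.le hEb).span_image_eq_top hE]
  exact span_mono (Set.image_subset_range _ _)

theorem IsGenericOn.card_filter_eq_zero_le [DecidableEq K] [Fintype κ]
    (hS : Pairwise (Disjoint on S)) (hcover : ∀ x, ∃ l, x ∈ S l) (hg : IsGenericOn K S T g univ)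
    {e m : ℕ} (hSe : ∀ l, #(S l) = #(T l) + e)
    (hJ : ∀ J : Finset κ, #J = m → finrank K V ≤ ∑ l ∈ J, #(T l))
    {φ : Dual K V} (hφ : φ ≠ 0) :
    #(univ.filter fun x => φ (g x) = 0) ≤ finrank K V - 1 + (m - 1) * e := by
  refine card_le_of_sum_min_card_inter_lt hS hcover hSe hJ ?_
  by_contra! h
  obtain ⟨E, -, hEZ, hE, hEb⟩ := exists_subsuperset_card_eq_meetsAtMost hS hcover
    (empty_subset _) (fun l => by simp) (Nat.zero_le _) h
  exact hφ (Dual.eq_zero_of_span_image_eq_top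
    ((hg.1 E (subset_univ E) hE.le hEb).span_image_eq_top hE)
    fun x hx => (mem_filter.mp (hEZ hx)).2)

theorem IsGenericOn.exists_le_card_filter_eq_zero [DecidableEq K] (hS : Pairwise (Disjoint on S))
    (hg : IsGenericOn K S T g univ) {J : Finset κ} {a : ℕ}
    (hJ : ∑ l ∈ J, #(T l) + a < finrank K V) (ha : ∑ l ∈ J, #(S l) + a ≤ Fintype.card ι) :
    ∃ φ : Dual K V, φ ≠ 0 ∧ ∑ l ∈ J, #(S l) + a ≤ #(univ.filter fun x => φ (g x) = 0) := by
  set U := J.biUnion S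
  have hU : #U = ∑ l ∈ J, #(S l) := card_biUnion fun i _ l _ hil => hS hil
  obtain ⟨E, hEU, hE⟩ := exists_subset_card_eq (s := Uᶜ) (n := a) (by rw [card_compl]; omega)
  have hspan : span K (g '' ↑(U ∪ E)) ≤ span K (g '' ↑(J.biUnion T ∪ E)) := by
    rw [span_le]
    rintro _ ⟨x, hx, rfl⟩
    rcases mem_union.mp hx with hx | hx
    · obtain ⟨l, hl, hxl⟩ := mem_biUnion.mp hx
      refine span_mono (Set.image_mono ?_) (hg.2 l x (mem_inter.mpr ⟨mem_univ x, hxl⟩))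
      exact coe_subset.mpr ((subset_biUnion_of_mem T hl).trans subset_union_left)
    · exact subset_span (Set.mem_image_of_mem g (mem_union_right _ hx))
  have hrank : finrank K (span K (g '' ↑(U ∪ E))) < finrank K V := calc
    _ ≤ finrank K (span K (g '' ↑(J.biUnion T ∪ E))) := finrank_mono hspan
    _ ≤ #(J.biUnion T ∪ E) := finrank_span_image_finset_le_card g _
    _ ≤ ∑ l ∈ J, #(T l) + a :=
        (card_union_le _ _).trans (hE ▸ Nat.add_le_add_right card_biUnion_le #E)
    _ < finrank K V := hJ
  obtain ⟨φ, hφ, hφU⟩ := Dual.exists_ne_zero_of_finrank_span_lt hrank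
  refine ⟨φ, hφ, ?_⟩
  calc ∑ l ∈ J, #(S l) + a = #(U ∪ E) := by
        rw [card_union_of_disjoint (disjoint_right.mpr fun x hx => mem_compl.mp (hEU hx)), hU, hE]
    _ ≤ _ := card_le_card fun x hx => mem_filter.mpr ⟨mem_univ x, hφU x hx⟩

end Properties

section MinimumDistance

variable {K ι : Type} [Field K] [DecidableEq K] [Fintype ι]

theorem hWt_add_card_filter_eq_zero (c : ι → K) :
    hWt c + #(univ.filter fun i => c i = 0) = Fintype.card ι := by
  rw [hWt, add_comm]
  exact card_filter_add_card_filter_not _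

theorem isMinDist_of_forall_le_of_exists {C : Submodule K (ι → K)} {d : ℕ}
    (hle : ∀ c ∈ C, c ≠ 0 → d ≤ hWt c) (hex : ∃ c ∈ C, c ≠ 0 ∧ hWt c ≤ d) : IsMinDist C d := by
  obtain ⟨c, hc, hc0, hcd⟩ := hex
  exact ⟨⟨c, hc, hc0, le_antisymm hcd (hle c hc hc0)⟩, fun _ ⟨c, hc, hc0, hw⟩ => hw ▸ hle c hc hc0⟩

variable {V : Type*} [AddCommGroup V] [Module K V] [FiniteDimensional K V] [DecidableEq ι]
  {g : ι → V} {κ : Type*} [Fintype κ] {S T : κ → Finset ι}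

theorem IsGenericOn.isMinDist (hS : Pairwise (Disjoint on S)) (hcover : ∀ x, ∃ l, x ∈ S l)
    (hTS : ∀ l, T l ⊆ S l) (hg : IsGenericOn K S T g univ) (hTV : finrank K V ≤ ∑ l, #(T l))
    {e m : ℕ} (hSe : ∀ l, #(S l) = #(T l) + e)
    (hJ : ∀ J : Finset κ, #J = m → finrank K V ≤ ∑ l ∈ J, #(T l)) {J₀ : Finset κ}
    (hJ₀ : #J₀ = m - 1) (hJ₀T : ∑ l ∈ J₀, #(T l) < finrank K V) :
    ∃ d, d + (finrank K V - 1 + (m - 1) * e) = Fintype.card ι ∧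
      IsMinDist (generatedCode K g) d := by
  have hSJ₀ := sum_card_eq_sum_card_add_card_mul hSe J₀
  rw [hJ₀] at hSJ₀
  have hroom : finrank K V - 1 + (m - 1) * e ≤ Fintype.card ι := by
    have hn := card_eq_sum_card_inter hS hcover univ
    simp only [univ_inter, card_univ] at hn
    rw [sum_card_eq_sum_card_add_card_mul hSe, card_univ] at hn
    have := Nat.mul_le_mul_right e (hJ₀ ▸ card_le_univ J₀)
    omega
  refine ⟨_, Nat.sub_add_cancel hroom, ?_⟩
  refine isMinDist_of_forall_le_of_exists (fun c hc hc0 => ?_) ?_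
  · obtain ⟨φ, rfl⟩ := mem_generatedCode.mp hc
    have := hg.card_filter_eq_zero_le hS hcover hSe hJ (φ := φ) (by rintro rfl; exact hc0 rfl)
    have := hWt_add_card_filter_eq_zero fun x => φ (g x)
    omega
  · obtain ⟨φ, hφ, hzeros⟩ := hg.exists_le_card_filter_eq_zero hS (J := J₀)
      (a := finrank K V - 1 - ∑ l ∈ J₀, #(T l)) (by omega) (by omega)
    have hspan : span K (g '' Set.univ) = ⊤ := by
      rw [Set.image_univ]
      exact hg.span_range_eq_top hS hcover hTS hTV
    refine ⟨_, mem_generatedCode.mpr ⟨φ, rfl⟩,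
      fun h0 => hφ (Dual.eq_zero_of_span_image_eq_top hspan fun x _ => congrFun h0 x), ?_⟩
    have := hWt_add_card_filter_eq_zero fun x => φ (g x)
    omega

end MinimumDistance

theorem IsGenericOn.puncturedDistGE {K : Type} {V κ : Type*} [Field K] [DecidableEq K]
    [AddCommGroup V] [Module K V] [FiniteDimensional K V] {n : ℕ} {S T : κ → Finset (Fin n)}
    {g : Fin n → V} (hS : Pairwise (Disjoint on S)) (hg : IsGenericOn K S T g univ) {i : κ} {δ : ℕ}
    (hTV : #(T i) ≤ finrank K V) (hSi : #(T i) + δ ≤ #(S i) + 1) :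
    PuncturedDistGE (generatedCode K g) (S i) δ := by
  intro c hc hex
  obtain ⟨φ, rfl⟩ := mem_generatedCode.mp hc
  have := Dual.card_lt_card_add_card_filter_ne_zero
    (fun x hx => hg.2 i x (mem_inter.mpr ⟨mem_univ x, hx⟩))
    (fun E hE hET => hg.1 E (subset_univ E) (hET ▸ hTV) (meetsAtMost_of_subset hS hE hET.le)) hex
  beta_reduce
  omega

theorem Nat.add_sub_one_div_sub_one_mul_le (k r : ℕ) : ((k + r - 1) / r - 1) * r ≤ k - 1 := by
  have := Nat.div_mul_le_self (k + r - 1) r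
  rw [Nat.sub_one_mul]
  omega

theorem Nat.choose_pred_lt_of_choose_le {n k q : ℕ} (hk : 1 ≤ k) (hkn : k ≤ n) (hq1 : 1 < q)
    (hq : n.choose (k - 1) ≤ q) : (n - 1).choose (k - 1) < q := by
  obtain ⟨n, rfl⟩ : ∃ n', n = n' + 1 := ⟨n - 1, by omega⟩
  obtain rfl | ⟨k, rfl⟩ : k = 1 ∨ ∃ k', k = k' + 2 := by
    rcases Nat.lt_or_ge k 2 with h | h
    · exact Or.inl (by omega)
    · exact Or.inr ⟨k - 2, by omega⟩
  · simpa using hq1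
  · simp only [Nat.add_sub_cancel, show k + 2 - 1 = k + 1 by omega, Nat.choose_succ_succ'] at hq ⊢
    have := Nat.choose_pos (show k ≤ n by omega)
    omega

/-- Theorem `opt-suf-1`: let `{S_1,…,S_t}` be a partition of `[n]` with
`δ ≤ |S_i| ≤ r+δ-1`, `t ≥ ⌈k/r⌉`, and `|∪_{i∈J} S_i| ≥ k + ⌈k/r⌉(δ-1)` for every
`J ⊆ [t]` with `|J| = ⌈k/r⌉`. Then over every finite field of size at least
`C(n, k-1)` there exists an optimal `(r,δ)_a` linear code of length `n`, dimension `k`. -/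
theorem statement11 {n k r δ t : ℕ} (hk1 : 1 ≤ k) (hkn : k ≤ n) (hr1 : 1 ≤ r)
    (hrk : r ≤ k) (hδ : 2 ≤ δ)
    (S : Fin t → Finset (Fin n))
    (hdisj : ∀ i j : Fin t, i ≠ j → Disjoint (S i) (S j))
    (hcover : Finset.univ.biUnion S = Finset.univ)
    (hcard : ∀ i : Fin t, δ ≤ (S i).card ∧ (S i).card ≤ r + δ - 1)
    (ht : (k + r - 1) / r ≤ t)
    (hJ : ∀ J : Finset (Fin t), J.card = (k + r - 1) / r →
      k + ((k + r - 1) / r) * (δ - 1) ≤ (J.biUnion S).card) :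
    ∀ (F : Type) [Field F] [Fintype F] [DecidableEq F],
      n.choose (k - 1) ≤ Fintype.card F →
      ∃ C : Submodule F (Fin n → F), IsOptimalLRC C k r δ := by
  intro F _ _ _ hq
  have hm1 : 1 ≤ (k + r - 1) / r := (Nat.le_div_iff_mul_le hr1).mpr (by omega)
  have hmr := Nat.add_sub_one_div_sub_one_mul_le k r
  generalize hm : (k + r - 1) / r = m at ht hJ hm1 hmr
  have hS : Pairwise (Disjoint on S) := fun i j hij => hdisj i j hij
  have hcov (x : Fin n) : ∃ l, x ∈ S l := by simpa using hcover.ge (mem_univ x)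
  obtain ⟨T, hTS, hSe⟩ := exists_subset_card_eq_add fun l => (Nat.sub_le δ 1).trans (hcard l).1
  have hTr (l : Fin t) : #(T l) ≤ r := by have := hSe l; have := (hcard l).2; omega
  have hJT (J : Finset (Fin t)) (hJm : #J = m) : k ≤ ∑ l ∈ J, #(T l) :=
    le_sum_card_of_add_mul_le_card_biUnion hS hSe (hJm ▸ hJ J hJm)
  obtain ⟨J, -, hJm⟩ := exists_subset_card_eq (s := (univ : Finset (Fin t))) (by simpa using ht)
  obtain ⟨J₀, -, hJ₀⟩ := exists_subset_card_eq (s := (univ : Finset (Fin t))) (n := m - 1)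
    (by simp; omega)
  have hJ₀T : ∑ l ∈ J₀, #(T l) < k :=
    (sum_le_card_nsmul J₀ (fun l => #(T l)) r fun l _ => hTr l).trans_lt
      (by rw [hJ₀, smul_eq_mul]; omega)
  have hTk : k ≤ ∑ l, #(T l) := (hJT J hJm).trans (sum_le_sum_of_subset (subset_univ J))
  have hV : finrank F (Fin k → F) = k := finrank_fin_fun F
  obtain ⟨g, hg⟩ := exists_isGenericOn_univ (K := F) (V := Fin k → F) hS hcov hTS
    (by omega) (by omega)
    (by simpa [hV] using Nat.choose_pred_lt_of_choose_le hk1 hkn Fintype.one_lt_card hq)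
  obtain ⟨d, hd, hdist⟩ := hg.isMinDist hS hcov hTS (by omega) hSe (by simpa [hV] using hJT) hJ₀
    (by omega)
  refine ⟨generatedCode F g, ?_, fun x => ?_, d, hdist, ?_⟩
  · rw [finrank_generatedCode (hg.span_range_eq_top hS hcov hTS (by omega)), hV]
  · obtain ⟨l, hl⟩ := hcov x
    exact ⟨S l, hl, (hcard l).2,
      hg.puncturedDistGE hS (by have := hTr l; omega) (by have := hSe l; omega)⟩
  · simp only [hV, Fintype.card_fin] at hd
    zify [hk1, hm1, show 1 ≤ δ by omega] at hd
    rw [hm]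
    linear_combination hd
end

section
/- Let n, k, r, δ be integers with n ≥ k ≥ 1, 1 ≤ r ≤ k, δ ≥ 2. Suppose (r+δ−1) divides n and n·r ≥ k·(r+δ−1). Then for every prime power q with q ≥ C(n, k−1) (the binomial coefficient n choose k−1), there exists an optimal (r,δ)_a linear code of length n and dimension k over F_q. -/
open Finset Submodule Module

section Avoidance

variable {K V : Type*} [Field K] [Fintype K] [AddCommGroup V] [Module K V] [Finite V]

/-- The subspaces all contain `0` and each has at most `q^(d-1)` elements, so `q` of them
cover at most `q (q^(d-1) - 1) < q^d - 1` nonzero vectors. -/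
theorem Submodule.exists_forall_notMem_of_card_le {ι : Type*} (s : Finset ι)
    (p : ι → Submodule K V) (hp : ∀ a ∈ s, p a ≠ ⊤) (hs : #s ≤ Fintype.card K) :
    ∃ x : V, ∀ a ∈ s, x ∉ p a := by
  classical
  have := Fintype.ofFinite V
  rcases s.eq_empty_or_nonempty with rfl | ⟨a₀, ha₀⟩
  · exact ⟨0, by simp⟩
  by_contra! hcover
  set q := Fintype.card K
  have hq : 2 ≤ q := Fintype.one_lt_card
  obtain ⟨d, hd⟩ : ∃ d, finrank K V = d + 1 :=
    Nat.exists_eq_add_one.mpr (lt_of_le_of_lt (Nat.zero_le _) (finrank_lt (hp a₀ ha₀)))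
  have hcard_p : ∀ a ∈ s, #{x | x ∈ p a} ≤ q ^ d := fun a ha => by
    rw [← Fintype.card_subtype, card_eq_pow_finrank (K := K) (V := p a)]
    exact Nat.pow_le_pow_right (by omega) (by have := finrank_lt (hp a ha); omega)
  have hcover' : univ.erase 0 ⊆ s.biUnion fun a => ({x | x ∈ p a} : Finset V).erase 0 := by
    intro x hx
    obtain ⟨a, ha, hxa⟩ := hcover x
    exact mem_biUnion.mpr ⟨a, ha, mem_erase.mpr ⟨ne_of_mem_erase hx, by simpa using hxa⟩⟩
  have key : q ^ (d + 1) - 1 ≤ q * (q ^ d - 1) :=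
    calc q ^ (d + 1) - 1 = #(univ.erase (0 : V)) := by
          rw [card_erase_of_mem (mem_univ _), card_univ, card_eq_pow_finrank (K := K), hd]
      _ ≤ ∑ a ∈ s, #(({x | x ∈ p a} : Finset V).erase 0) :=
          (card_le_card hcover').trans card_biUnion_le
      _ ≤ ∑ _a ∈ s, (q ^ d - 1) := sum_le_sum fun a ha => by
          rw [card_erase_of_mem (by simp)]; have := hcard_p a ha; omega
      _ ≤ q * (q ^ d - 1) := by rw [sum_const, smul_eq_mul]; exact Nat.mul_le_mul_right _ hs
  have : 1 ≤ q ^ d := Nat.one_le_pow _ _ (by omega)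
  rw [pow_succ, Nat.mul_sub_one, mul_comm] at key
  have : q ≤ q * q ^ d := Nat.le_mul_of_pos_right q this
  omega

theorem Submodule.exists_mem_forall_notMem_of_card_le {ι : Type*} (W : Submodule K V)
    (s : Finset ι) (p : ι → Submodule K V) (hp : ∀ a ∈ s, ¬ W ≤ p a)
    (hs : #s ≤ Fintype.card K) : ∃ x ∈ W, ∀ a ∈ s, x ∉ p a := by
  obtain ⟨x, hx⟩ := exists_forall_notMem_of_card_le s (fun a => (p a).comap W.subtype)
    (fun a ha => comap_subtype_eq_top.not.mpr (hp a ha)) hs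
  exact ⟨x, x.2, hx⟩

end Avoidance

section ColumnCode

variable {F V ι : Type} [Field F] [AddCommGroup V] [Module F V]

variable (F) in
def evalMap (c : ι → V) : Dual F V →ₗ[F] (ι → F) :=
  LinearMap.pi fun i => Dual.eval F V (c i)

lemma finrank_span_image_le (c : ι → V) (S : Finset ι) :
    finrank F (span F (c '' S)) ≤ #S := by
  classical
  have := finrank_span_finset_le_card (R := F) (S.image c)
  rw [coe_image] at this
  exact this.trans card_image_le

lemma span_image_ne_top [FiniteDimensional F V] (c : ι → V) {S : Finset ι}
    (hS : #S < finrank F V) : span F (c '' S) ≠ ⊤ := fun h => by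
  have := finrank_span_image_le (F := F) c S
  rw [h, finrank_top] at this
  omega

lemma LinearIndepOn.finrank_span_image {c : ι → V} {S : Finset ι}
    (h : LinearIndepOn F c (S : Set ι)) : finrank F (span F (c '' S)) = #S := by
  rw [Set.image_eq_range, ← Set.finrank, ← linearIndependent_iff_card_eq_finrank_span.mp h]
  simp

lemma LinearIndepOn.span_image_eq_top_s12 [FiniteDimensional F V] {c : ι → V} {S : Finset ι}
    (h : LinearIndepOn F c (S : Set ι)) (hS : #S = finrank F V) : span F (c '' S) = ⊤ := by
  rw [Set.image_eq_range]
  exact LinearIndependent.span_eq_top_of_card_eq_finrank' h (by simpa using hS)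

lemma span_image_le_ker {c : ι → V} {Z : Set ι} {φ : Dual F V} (hφ : ∀ i ∈ Z, φ (c i) = 0) :
    span F (c '' Z) ≤ LinearMap.ker φ :=
  span_le.mpr (by rintro _ ⟨i, hi, rfl⟩; exact hφ i hi)

lemma eq_zero_of_span_image_eq_top {c : ι → V} {Z : Set ι} (hZ : span F (c '' Z) = ⊤)
    {φ : Dual F V} (hφ : ∀ i ∈ Z, φ (c i) = 0) : φ = 0 :=
  LinearMap.ker_eq_top.mp (top_le_iff.mp (hZ ▸ span_image_le_ker hφ))

lemma finrank_range_evalMap [FiniteDimensional F V] {c : ι → V}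
    (hc : span F (Set.range c) = ⊤) :
    finrank F (LinearMap.range (evalMap F c)) = finrank F V := by
  rw [LinearMap.finrank_range_of_inj, Subspace.dual_finrank_eq]
  rw [← LinearMap.ker_eq_bot, LinearMap.ker_eq_bot']
  exact fun φ hφ => eq_zero_of_span_image_eq_top (Z := Set.univ) (by rwa [Set.image_univ])
    fun i _ => congr_fun hφ i

lemma exists_mem_forall_notMem_span [Fintype F] [Finite V] [Fintype ι] [DecidableEq ι]
    {c : ι → V} {W : Submodule F V} {N : ℕ} (hq : (Fintype.card ι).choose N ≤ Fintype.card F)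
    {P : Finset ι → Prop}
    (hP : ∀ S, P S → ∃ T, S ⊆ T ∧ #T = N ∧ ¬ W ≤ span F (c '' T)) :
    ∃ w ∈ W, ∀ S, P S → w ∉ span F (c '' S) := by
  classical
  obtain ⟨w, hwW, hw⟩ := W.exists_mem_forall_notMem_of_card_le (ι := Finset ι)
    {T ∈ powersetCard N univ | ¬ W ≤ span F (c '' T)} (fun T => span F (c '' T))
    (fun T hT => (mem_filter.mp hT).2)
    ((card_filter_le _ _).trans (by rwa [card_powersetCard, card_univ]))
  refine ⟨w, hwW, fun S hS hwS => ?_⟩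
  obtain ⟨T, hST, hT, hWT⟩ := hP S hS
  exact hw T (mem_filter.mpr ⟨mem_powersetCard.mpr ⟨subset_univ _, hT⟩, hWT⟩)
    (span_mono (Set.image_mono (coe_subset.mpr hST)) hwS)

variable [Fintype ι] [DecidableEq F]

lemma hWt_evalMap_add_card_zeros (c : ι → V) (φ : Dual F V) :
    hWt (evalMap F c φ) + #{i | φ (c i) = 0} = Fintype.card ι := by
  rw [hWt, ← card_univ, add_comm]
  exact card_filter_add_card_filter_not (s := univ) (fun i => φ (c i) = 0)

lemma isMinDist_range_evalMap [FiniteDimensional F V] {c : ι → V} {K : ℕ}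
    (hK : K ≤ Fintype.card ι) (hspan : ∀ Z : Finset ι, K ≤ #Z → span F (c '' Z) = ⊤)
    (R : Finset ι) (hR : K ≤ #R + 1) (hRspan : span F (c '' R) ≠ ⊤) :
    IsMinDist (LinearMap.range (evalMap F c)) (Fintype.card ι + 1 - K) := by
  have hlow : ∀ φ : Dual F V, φ ≠ 0 → Fintype.card ι + 1 - K ≤ hWt (evalMap F c φ) := by
    intro φ hφ
    by_contra! hlt
    have hzeros : K ≤ #{i | φ (c i) = 0} := by
      have := hWt_evalMap_add_card_zeros c φ
      omega
    exact hφ (eq_zero_of_span_image_eq_top (hspan _ hzeros) fun i hi => by simpa using hi)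
  obtain ⟨φ, hφ, hRker⟩ := exists_le_ker_of_lt_top _ hRspan.lt_top
  refine ⟨⟨evalMap F c φ, LinearMap.mem_range_self _ _, fun h0 => ?_,
    le_antisymm ?_ (hlow φ hφ)⟩, ?_⟩
  · exact hφ (eq_zero_of_span_image_eq_top (hspan univ (by simpa using hK))
      fun i _ => congr_fun h0 i)
  · have hR' : R ⊆ ({i | φ (c i) = 0} : Finset ι) := fun i hi =>
      mem_filter.mpr ⟨mem_univ _, hRker (subset_span ⟨i, hi, rfl⟩)⟩
    have := card_le_card hR'
    have := hWt_evalMap_add_card_zeros c φ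
    omega
  · rintro _ ⟨_, ⟨ψ, rfl⟩, hne, rfl⟩
    exact hlow ψ fun h => hne (by rw [h, map_zero])

end ColumnCode

theorem Finset.exists_superset_card_eq_of_insert {α : Type*} [DecidableEq α]
    {P : Finset α → Prop} {N : ℕ} (hins : ∀ S, P S → #S < N → ∃ a ∉ S, P (insert a S))
    {S : Finset α} (hS : P S) (hSN : #S ≤ N) : ∃ T, S ⊆ T ∧ P T ∧ #T = N := by
  induction h : N - #S generalizing S with
  | zero => exact ⟨S, subset_refl _, hS, by omega⟩
  | succ d ih =>
    obtain ⟨a, ha, hPa⟩ := hins S hS (by omega)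
    obtain ⟨T, hT, hPT, hTN⟩ := ih hPa (by rw [card_insert_of_notMem ha]; omega)
      (by rw [card_insert_of_notMem ha]; omega)
    exact ⟨T, (subset_insert a S).trans hT, hPT, hTN⟩

/-- Indices with `r ≤ z j` contribute `r` on the right and at most `r + d` to `hsum`: if there
are at most `s` of them, the remaining indices make up the difference, otherwise they alone give
`(s + 1) r`. -/
lemma le_sum_min {J : Finset ℕ} {z : ℕ → ℕ} {r d s e : ℕ} (hz : ∀ j ∈ J, z j ≤ r + d)
    (he : e ≤ r) (hsum : s * (r + d) + e ≤ ∑ j ∈ J, z j) :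
    s * r + e ≤ ∑ j ∈ J, min (z j) r := by
  set t := #{j ∈ J | r ≤ z j}
  have hmin : t * r ≤ ∑ j ∈ J, min (z j) r :=
    calc t * r = ∑ j ∈ J with r ≤ z j, min (z j) r := by
          rw [sum_congr rfl fun j hj => min_eq_right (mem_filter.mp hj).2, sum_const,
            smul_eq_mul]
      _ ≤ ∑ j ∈ J, min (z j) r := sum_le_sum_of_subset (filter_subset _ _)
  have hz' : ∑ j ∈ J, z j ≤ ∑ j ∈ J, min (z j) r + t * d :=
    calc ∑ j ∈ J, z j ≤ ∑ j ∈ J, (min (z j) r + if r ≤ z j then d else 0) :=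
          sum_le_sum fun j hj => by have := hz j hj; split_ifs <;> omega
      _ = ∑ j ∈ J, min (z j) r + t * d := by
          rw [sum_add_distrib, sum_ite, sum_const_zero, sum_const, smul_eq_mul, add_zero]
  rcases le_or_gt t s with hts | hst
  · have := Nat.mul_le_mul_right d hts
    rw [Nat.mul_add] at hsum
    omega
  · have := Nat.mul_le_mul_right r (Nat.succ_le_of_lt hst)
    rw [Nat.succ_mul] at this
    omega

section Capped

variable {ι : Type*} {g : ι → ℕ}

variable (g) in
def IsCapped (cap : ℕ → ℕ) (S : Finset ι) : Prop := ∀ j, #{i ∈ S | g i = j} ≤ cap j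

def capAt (r j₀ j : ℕ) : ℕ := if j = j₀ then r - 1 else r

@[simp]
lemma capAt_self {r j₀ : ℕ} : capAt r j₀ j₀ = r - 1 := if_pos rfl

lemma capAt_of_ne {r j₀ j : ℕ} (h : j ≠ j₀) : capAt r j₀ j = r := if_neg h

lemma capAt_le {r j₀ j : ℕ} : capAt r j₀ j ≤ r := by
  unfold capAt
  split_ifs <;> omega

lemma sum_capAt {m r j₀ : ℕ} (hr : 1 ≤ r) (hj₀ : j₀ < m) :
    ∑ j ∈ range m, capAt r j₀ j + 1 = m * r := by
  rw [← add_sum_erase _ _ (mem_range.mpr hj₀),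
    sum_congr rfl fun j hj => capAt_of_ne (ne_of_mem_erase hj), capAt_self, sum_const,
    card_erase_of_mem (mem_range.mpr hj₀), card_range, smul_eq_mul]
  obtain ⟨m, rfl⟩ := Nat.exists_eq_add_of_lt hj₀
  rw [show j₀ + m + 1 - 1 = j₀ + m by omega, Nat.succ_mul]
  omega

lemma IsCapped.mono {cap cap' : ℕ → ℕ} {S T : Finset ι} (h : IsCapped g cap S) (hTS : T ⊆ S)
    (hcap : ∀ j, cap j ≤ cap' j) : IsCapped g cap' T :=
  fun j => (card_le_card (filter_subset_filter _ hTS)).trans ((h j).trans (hcap j))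

lemma isCapped_of_card_le {cap : ℕ → ℕ} {S : Finset ι} (h : ∀ j, #S ≤ cap j) :
    IsCapped g cap S :=
  fun j => (card_filter_le _ _).trans (h j)

variable [DecidableEq ι]

lemma IsCapped.insert {cap : ℕ → ℕ} {S : Finset ι} {a : ι} (h : IsCapped g cap S)
    (ha : #{i ∈ S | g i = g a} < cap (g a)) : IsCapped g cap (insert a S) := by
  intro j
  rw [filter_insert]
  split_ifs with hj
  · subst hj
    exact (card_insert_le _ _).trans ha
  · exact h j

lemma IsCapped.erase {r : ℕ} {S : Finset ι} {a : ι} (h : IsCapped g (fun _ => r) S)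
    (ha : a ∈ S) : IsCapped g (capAt r (g a)) (S.erase a) := by
  intro j
  rw [filter_erase, capAt]
  split_ifs with hj
  · rw [card_erase_of_mem (mem_filter.mpr ⟨ha, hj.symm⟩)]
    have : #{i ∈ S | g i = j} ≤ r := h j
    omega
  · exact card_erase_le.trans (h j)

lemma exists_insert_isCapped {cap : ℕ → ℕ} {S Z : Finset ι} {J : Finset ℕ}
    (hJ : ∀ i ∈ S, g i ∈ J) (h : IsCapped g cap S)
    (hlt : #S < ∑ j ∈ J, min #{i ∈ Z | g i = j} (cap j)) :
    ∃ a ∈ Z, a ∉ S ∧ IsCapped g cap (insert a S) := by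
  rw [card_eq_sum_card_fiberwise hJ] at hlt
  obtain ⟨j, -, hj⟩ := exists_lt_of_sum_lt hlt
  obtain ⟨a, ha, haS⟩ := exists_mem_notMem_of_card_lt_card (hj.trans_le (min_le_left _ _))
  rw [mem_filter] at ha
  refine ⟨a, ha.1, fun h' => haS (mem_filter.mpr ⟨h', ha.2⟩), h.insert ?_⟩
  rw [ha.2]
  exact hj.trans_le (min_le_right _ _)

end Capped

lemma card_fin_filter_Ico {N a b : ℕ} (h : a + b ≤ N) :
    #{i : Fin N | a ≤ (i : ℕ) ∧ (i : ℕ) < a + b} = b := by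
  simp only [← card_map Fin.valEmbedding, map_filter', Fin.valEmbedding_apply, Fin.exists_iff]
  rw [show ({x ∈ map Fin.valEmbedding univ | _} : Finset ℕ) = Ico a (a + b) by
    ext x; simp; omega]
  simp

section Layout

variable {n m r δ : ℕ}

/-- Coordinates `[0, m r)` carry data, cut into `m` runs of length `r`; coordinates
`[m r, m (r + δ - 1))` carry parities, cut into `m` runs of length `δ - 1`. The `j`-th local
group is the `j`-th data run together with the `j`-th parity run. -/
def grp (m r δ : ℕ) (i : Fin n) : ℕ :=
  if (i : ℕ) < m * r then i / r else (i - m * r) / (δ - 1)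

def dataCols (n m r j : ℕ) : Finset (Fin n) := {i | (i : ℕ) < m * r ∧ (i : ℕ) / r = j}

lemma mem_dataCols {j : ℕ} {i : Fin n} :
    i ∈ dataCols n m r j ↔ (i : ℕ) < m * r ∧ (i : ℕ) / r = j := by
  simp [dataCols]

lemma grp_of_mem_dataCols {j : ℕ} {i : Fin n} (h : i ∈ dataCols n m r j) : grp m r δ i = j := by
  rw [mem_dataCols] at h
  simp [grp, h.1, h.2]

lemma mem_dataCols_grp {i : Fin n} (h : (i : ℕ) < m * r) : i ∈ dataCols n m r (grp m r δ i) := by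
  simp [mem_dataCols, grp, h]

lemma card_dataCols (h : m * r ≤ n) {j : ℕ} (hj : j < m) : #(dataCols n m r j) = r := by
  have hjm : j * r + r ≤ m * r := by rw [← Nat.succ_mul]; exact Nat.mul_le_mul_right r hj
  calc #(dataCols n m r j) = #{i : Fin n | j * r ≤ (i : ℕ) ∧ (i : ℕ) < j * r + r} := by
        congr 1
        ext i
        simp only [mem_dataCols, mem_filter, mem_univ, true_and]
        rcases Nat.eq_zero_or_pos r with rfl | hr
        · simp
        rw [Nat.div_eq_iff hr]
        omega
    _ = r := card_fin_filter_Ico (by omega)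

lemma filter_lt_grp_eq_dataCols {j : ℕ} :
    ({i | (i : ℕ) < m * r ∧ grp m r δ i = j} : Finset (Fin n)) = dataCols n m r j := by
  ext i
  rw [mem_dataCols, Finset.mem_filter]
  simp +contextual [grp]

variable (hn : n = m * (r + δ - 1)) (hδ : 2 ≤ δ)
include hn hδ

lemma mul_le_of_eq_mul_add_sub_one : m * r ≤ n := by
  rw [hn]
  exact Nat.mul_le_mul_left m (by omega)

lemma grp_lt (i : Fin n) : grp m r δ i < m := by
  have hi := i.isLt
  have hsplit : n = m * r + m * (δ - 1) := by rw [hn, ← Nat.mul_add]; congr 1; omega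
  unfold grp
  split_ifs with h
  · exact Nat.div_lt_of_lt_mul (by rwa [Nat.mul_comm r m])
  · exact Nat.div_lt_of_lt_mul (by rw [Nat.mul_comm (δ - 1) m]; omega)

lemma card_grp_eq {j : ℕ} (hj : j < m) : #{i : Fin n | grp m r δ i = j} = r + δ - 1 := by
  have hsplit : n = m * r + m * (δ - 1) := by rw [hn, ← Nat.mul_add]; congr 1; omega
  have hjm : j * (δ - 1) + (δ - 1) ≤ m * (δ - 1) := by
    rw [← Nat.succ_mul]; exact Nat.mul_le_mul_right _ hj
  have hparity : ({i | grp m r δ i = j} : Finset (Fin n)) = dataCols n m r j ∪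
      ({i | m * r + j * (δ - 1) ≤ (i : ℕ) ∧ (i : ℕ) < m * r + j * (δ - 1) + (δ - 1)} :
        Finset (Fin n)) := by
    ext i
    rw [Finset.mem_filter, mem_union, mem_dataCols, Finset.mem_filter]
    simp only [Finset.mem_univ, true_and, grp]
    split_ifs with h
    · constructor
      · exact fun h' => Or.inl ⟨h, h'⟩
      · rintro (⟨-, h'⟩ | h') <;> omega
    · rw [Nat.div_eq_iff (by omega)]
      omega
  rw [hparity, card_union_of_disjoint, card_dataCols (by rw [hsplit]; omega) hj,
    card_fin_filter_Ico (by omega)]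
  · omega
  · rw [disjoint_left]
    intro i hi hi'
    simp only [mem_filter, mem_univ, true_and, mem_dataCols] at hi hi'
    omega

lemma card_grp_lt {s : ℕ} (hs : s ≤ m) : #{i : Fin n | grp m r δ i < s} = s * (r + δ - 1) := by
  rw [card_eq_sum_card_fiberwise (f := grp m r δ) (t := range s)
    fun i hi => mem_range.mpr (mem_filter.mp hi).2]
  rw [sum_congr rfl fun j hj => ?_, sum_const, card_range, smul_eq_mul]
  have hj := mem_range.mp hj
  rw [filter_filter, ← card_grp_eq hn hδ (j := j) (by omega)]
  congr 1
  ext i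
  simp only [Finset.mem_filter, Finset.mem_univ, true_and]
  constructor
  · exact And.right
  · rintro rfl; exact ⟨hj, rfl⟩

lemma exists_isCapped_subset {s e : ℕ} (he : e ≤ r) {Z : Finset (Fin n)}
    (hZ : s * (r + δ - 1) + e ≤ #Z) :
    ∃ U ⊆ Z, IsCapped (grp m r δ) (fun _ => r) U ∧ #U = s * r + e := by
  have hsum : s * r + e ≤ ∑ j ∈ range m, min #{i ∈ Z | grp m r δ i = j} r := by
    refine le_sum_min (d := δ - 1) (fun j hj => ?_) he ?_
    · calc #{i ∈ Z | grp m r δ i = j} ≤ #{i : Fin n | grp m r δ i = j} :=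
            card_le_card (filter_subset_filter _ (subset_univ Z))
        _ = r + (δ - 1) := by rw [card_grp_eq hn hδ (mem_range.mp hj)]; omega
    · rw [← card_eq_sum_card_fiberwise fun i _ => mem_range.mpr (grp_lt hn hδ i)]
      rwa [show r + (δ - 1) = r + δ - 1 by omega]
  obtain ⟨U, -, ⟨hUZ, hUcap⟩, hU⟩ := exists_superset_card_eq_of_insert
    (P := fun U => U ⊆ Z ∧ IsCapped (grp m r δ) (fun _ => r) U)
    (fun U ⟨hUZ, hUcap⟩ hUk => by
      obtain ⟨a, ha, haU, hcap⟩ := exists_insert_isCapped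
        (fun i _ => mem_range.mpr (grp_lt hn hδ i)) hUcap (hUk.trans_le hsum)
      exact ⟨a, haU, insert_subset ha hUZ, hcap⟩)
    (S := ∅) ⟨empty_subset _, fun j => by simp⟩ (Nat.zero_le _)
  exact ⟨U, hUZ, hUcap, hU⟩

lemma card_grp_lt_or_lt {s a : ℕ} (hs : s ≤ m) (hsa : s * r ≤ a) (ham : a ≤ m * r) :
    s * (r + δ - 1) + (a - s * r) ≤ #{i : Fin n | grp m r δ i < s ∨ (i : ℕ) < a} := by
  have hmr := mul_le_of_eq_mul_add_sub_one hn hδ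
  have hdisj : Disjoint ({i | grp m r δ i < s} : Finset (Fin n))
      ({i | s * r ≤ (i : ℕ) ∧ (i : ℕ) < s * r + (a - s * r)} : Finset (Fin n)) := by
    refine disjoint_left.mpr fun i hi hi' => ?_
    simp only [Finset.mem_filter, Finset.mem_univ, true_and] at hi hi'
    rw [grp, if_pos (by omega)] at hi
    have hr : 0 < r := Nat.pos_of_ne_zero fun h => by subst h; simp at ham hi'; omega
    exact absurd hi (not_lt.mpr ((Nat.le_div_iff_mul_le hr).mpr hi'.1))
  rw [← card_grp_lt hn hδ hs,
    ← card_fin_filter_Ico (N := n) (a := s * r) (b := a - s * r) (by omega),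
    ← card_union_of_disjoint hdisj]
  refine card_le_card fun i hi => ?_
  simp only [mem_union, Finset.mem_filter, Finset.mem_univ, true_and] at hi ⊢
  omega

lemma exists_superset_isCapped_card_eq {k : ℕ} (hr : 1 ≤ r) (hkm : k ≤ m * r) {t j : ℕ}
    (ht : m * r ≤ t) (hj : j < m) {S : Finset (Fin n)}
    (hS : ∀ i ∈ S, (i : ℕ) < t) (hcap : IsCapped (grp m r δ) (capAt r j) S) (hSk : #S < k) :
    ∃ T, S ⊆ T ∧ ((∀ i ∈ T, (i : ℕ) < t) ∧ IsCapped (grp m r δ) (capAt r j) T) ∧ #T = k - 1 := by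
  refine exists_superset_card_eq_of_insert (fun T ⟨hT, hTcap⟩ hTk => ?_) ⟨hS, hcap⟩ (by omega)
  have hmr := mul_le_of_eq_mul_add_sub_one hn hδ
  have hfiber : ∀ j' ∈ range m,
      min #{i ∈ ({i | (i : ℕ) < m * r} : Finset (Fin n)) | grp m r δ i = j'} (capAt r j j') =
        capAt r j j' := fun j' hj' => by
    rw [filter_filter, filter_lt_grp_eq_dataCols, card_dataCols hmr (mem_range.mp hj')]
    exact min_eq_right capAt_le
  obtain ⟨a, ha, haT, hcap'⟩ := exists_insert_isCapped (fun i _ => mem_range.mpr (grp_lt hn hδ i))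
    hTcap (Z := ({i | (i : ℕ) < m * r} : Finset (Fin n))) (by
      rw [sum_congr rfl hfiber]
      change #T < ∑ j' ∈ range m, capAt r j j'
      have := sum_capAt (m := m) hr hj
      omega)
  refine ⟨a, haT, fun i hi => ?_, hcap'⟩
  rcases mem_insert.mp hi with rfl | hi
  · have := (mem_filter.mp ha).2; omega
  · exact hT i hi

end Layout

section Construction

variable {F : Type} [Field F] {n m r δ k : ℕ}

structure IsGoodUpTo (m r δ : ℕ) (c : Fin n → Fin k → F) (t : ℕ) : Prop where
  linearIndepOn : ∀ S : Finset (Fin n), (∀ i ∈ S, (i : ℕ) < t) →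
    IsCapped (grp m r δ) (fun _ => r) S → #S ≤ k → LinearIndepOn F c (S : Set (Fin n))
  mem_span : ∀ i : Fin n, (i : ℕ) < t → c i ∈ span F (c '' ↑(dataCols n m r (grp m r δ i)))

lemma isGoodUpTo_zero (c : Fin n → Fin k → F) : IsGoodUpTo m r δ c 0 where
  linearIndepOn S hS _ _ := by
    rw [eq_empty_of_forall_notMem fun i hi => Nat.not_lt_zero _ (hS i hi), coe_empty]
    exact linearIndepOn_empty F c
  mem_span i hi := absurd hi (Nat.not_lt_zero _)

lemma IsGoodUpTo.update {c : Fin n → Fin k → F} {t : ℕ} (hc : IsGoodUpTo m r δ c t)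
    {a : Fin n} (ha : (a : ℕ) = t) {w : Fin k → F}
    (havoid : ∀ S : Finset (Fin n), (∀ i ∈ S, (i : ℕ) < t) →
      IsCapped (grp m r δ) (capAt r (grp m r δ a)) S → #S < k → w ∉ span F (c '' S))
    (hw : w ∈ span F (Function.update c a w '' ↑(dataCols n m r (grp m r δ a)))) :
    IsGoodUpTo m r δ (Function.update c a w) (t + 1) where
  linearIndepOn S hS hcap hk := by
    have hlt : ∀ i ∈ S, i ≠ a → (i : ℕ) < t := fun i hi hia => by
      have := hS i hi
      have : (i : ℕ) ≠ t := fun h => hia (Fin.ext (h.trans ha.symm))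
      omega
    have hEq : Set.EqOn (Function.update c a w) c (S.erase a : Set (Fin n)) :=
      fun i hi => Function.update_of_ne (ne_of_mem_erase hi) _ _
    have hS₀ : ∀ i ∈ S.erase a, (i : ℕ) < t :=
      fun i hi => hlt i (mem_of_mem_erase hi) (ne_of_mem_erase hi)
    by_cases haS : a ∈ S
    · rw [← insert_erase haS, coe_insert, linearIndepOn_insert (by simp),
        linearIndepOn_congr hEq, hEq.image_eq, Function.update_self]
      refine ⟨hc.linearIndepOn _ hS₀ (hcap.mono (erase_subset _ _) fun _ => le_rfl)
        (card_erase_le.trans hk), havoid _ hS₀ (hcap.erase haS) ?_⟩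
      have := card_erase_add_one haS
      omega
    · rw [erase_eq_of_notMem haS] at hEq hS₀
      exact (linearIndepOn_congr hEq).mpr (hc.linearIndepOn S hS₀ hcap hk)
  mem_span i hi := by
    by_cases hia : i = a
    · subst hia
      rwa [Function.update_self]
    have hit : (i : ℕ) < t := by
      have : (i : ℕ) ≠ t := fun h => hia (Fin.ext (h.trans ha.symm))
      omega
    rw [Function.update_of_ne hia]
    by_cases hdata : (i : ℕ) < m * r
    · exact subset_span ⟨i, mem_dataCols_grp hdata, Function.update_of_ne hia _ _⟩
    · have hEq : Set.EqOn (Function.update c a w) c (dataCols n m r (grp m r δ i) : Set (Fin n)) :=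
        fun i' hi' => Function.update_of_ne (fun h => by
          have := (mem_dataCols.mp (h ▸ hi')).1
          omega) _ _
      rw [hEq.image_eq]
      exact hc.mem_span i hit

/-- The data columns of group `j` and `k - r` columns of `S` outside group `j` form a capped,
hence spanning, set of `k` columns, which cannot lie in the span of the `k - 1` columns of `S`. -/
lemma IsGoodUpTo.not_span_dataCols_le {c : Fin n → Fin k → F} {t j : ℕ}
    (hc : IsGoodUpTo m r δ c t) (hmr : m * r ≤ n) (hr : 1 ≤ r) (hrk : r ≤ k) (ht : m * r ≤ t)
    (hj : j < m) {S : Finset (Fin n)} (hS : ∀ i ∈ S, (i : ℕ) < t)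
    (hcap : IsCapped (grp m r δ) (capAt r j) S) (hSk : #S = k - 1) :
    ¬ span F (c '' ↑(dataCols n m r j)) ≤ span F (c '' S) := by
  intro hle
  have hout : k - r ≤ #{i ∈ S | ¬ grp m r δ i = j} := by
    have := card_filter_add_card_filter_not (s := S) (fun i => grp m r δ i = j)
    have := hcap j
    rw [capAt_self] at this
    omega
  obtain ⟨W, hWS, hW⟩ := exists_subset_card_eq hout
  have hWS' : W ⊆ S := hWS.trans (filter_subset _ _)
  have hdisj : Disjoint (dataCols n m r j) W := disjoint_left.mpr fun i hi hiW =>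
    (mem_filter.mp (hWS hiW)).2 (grp_of_mem_dataCols hi)
  have hU : #(dataCols n m r j ∪ W) = k := by
    rw [card_union_of_disjoint hdisj, card_dataCols hmr hj, hW]
    omega
  have hUcap : IsCapped (grp m r δ) (fun _ => r) (dataCols n m r j ∪ W) := by
    intro j'
    rw [filter_union]
    by_cases hj' : j' = j
    · subst hj'
      rw [filter_eq_empty_iff.mpr fun i hi => (mem_filter.mp (hWS hi)).2, union_empty]
      exact (card_filter_le _ _).trans (card_dataCols hmr hj).le
    · rw [filter_eq_empty_iff.mpr fun i hi (h : grp m r δ i = j') =>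
        hj' (h.symm.trans (grp_of_mem_dataCols hi)), empty_union]
      exact (card_le_card (filter_subset_filter _ hWS')).trans ((hcap j').trans capAt_le)
  have hUt : ∀ i ∈ dataCols n m r j ∪ W, (i : ℕ) < t := fun i hi => by
    rcases mem_union.mp hi with hi | hi
    · have := (mem_dataCols.mp hi).1; omega
    · exact hS i (hWS' hi)
  have htop : span F (c '' S) = ⊤ := by
    refine eq_top_iff.mpr ((((hc.linearIndepOn _ hUt hUcap hU.le).span_image_eq_top_s12
      (by rw [hU, finrank_fin_fun])).ge).trans ?_)
    rw [coe_union, Set.image_union, span_union]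
    exact sup_le hle (span_mono (Set.image_mono (coe_subset.mpr hWS')))
  exact span_image_ne_top c (by rw [hSk, finrank_fin_fun]; omega) htop

lemma IsGoodUpTo.exists_succ [Fintype F] {c : Fin n → Fin k → F} {t : ℕ}
    (hc : IsGoodUpTo m r δ c t) (hn : n = m * (r + δ - 1)) (hδ : 2 ≤ δ) (hr : 1 ≤ r)
    (hrk : r ≤ k) (hkm : k ≤ m * r) (hq : n.choose (k - 1) ≤ Fintype.card F) (ht : t < n) :
    ∃ c' : Fin n → Fin k → F, IsGoodUpTo m r δ c' (t + 1) := by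
  have hmr := mul_le_of_eq_mul_add_sub_one hn hδ
  set a : Fin n := ⟨t, ht⟩
  set P : Finset (Fin n) → Prop := fun S => (∀ i ∈ S, (i : ℕ) < t) ∧
    IsCapped (grp m r δ) (capAt r (grp m r δ a)) S ∧ #S < k
  rw [← Fintype.card_fin n] at hq
  by_cases hdata : t < m * r
  · obtain ⟨w, -, hw⟩ := exists_mem_forall_notMem_span (c := c) (W := ⊤) (P := P) hq
      fun S ⟨_, _, hSk⟩ => by
        obtain ⟨T, hST, -, hT⟩ := exists_subsuperset_card_eq (n := k - 1) (subset_univ S) (by omega)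
          (by rw [card_univ, Fintype.card_fin]; omega)
        exact ⟨T, hST, hT, by
          rw [top_le_iff]; exact span_image_ne_top c (by rw [hT, finrank_fin_fun]; omega)⟩
    exact ⟨_, hc.update rfl (fun S h₁ h₂ h₃ => hw S ⟨h₁, h₂, h₃⟩)
      (subset_span ⟨a, mem_dataCols_grp hdata, Function.update_self _ _ _⟩)⟩
  · have hj := grp_lt hn hδ a
    obtain ⟨w, hwD, hw⟩ := exists_mem_forall_notMem_span (c := c)
      (W := span F (c '' ↑(dataCols n m r (grp m r δ a)))) (P := P) hq
      fun S ⟨hS, hcap, hSk⟩ => by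
        obtain ⟨T, hST, ⟨hT, hTcap⟩, hTk⟩ :=
          exists_superset_isCapped_card_eq hn hδ hr hkm (by omega) hj hS hcap hSk
        exact ⟨T, hST, hTk, hc.not_span_dataCols_le hmr hr hrk (by omega) hj hT hTcap hTk⟩
    have hEq : Set.EqOn (Function.update c a w) c ↑(dataCols n m r (grp m r δ a)) :=
      fun i hi => Function.update_of_ne (fun h => by
        have := (mem_dataCols.mp (h ▸ hi)).1
        exact hdata this) _ _
    exact ⟨_, hc.update rfl (fun S h₁ h₂ h₃ => hw S ⟨h₁, h₂, h₃⟩) (by rwa [hEq.image_eq])⟩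

lemma exists_isGoodUpTo [Fintype F] (hn : n = m * (r + δ - 1)) (hδ : 2 ≤ δ) (hr : 1 ≤ r)
    (hrk : r ≤ k) (hkm : k ≤ m * r) (hq : n.choose (k - 1) ≤ Fintype.card F) :
    ∃ c : Fin n → Fin k → F, IsGoodUpTo m r δ c n := by
  suffices ∀ t ≤ n, ∃ c : Fin n → Fin k → F, IsGoodUpTo m r δ c t from this n le_rfl
  intro t
  induction t with
  | zero => exact fun _ => ⟨0, isGoodUpTo_zero 0⟩
  | succ t ih =>
    intro ht
    obtain ⟨c, hc⟩ := ih (by omega)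
    exact hc.exists_succ hn hδ hr hrk hkm hq (by omega)

end Construction

lemma add_pred_div_mul_le {k m r δ : ℕ} (hr : 1 ≤ r) (hδ : 1 ≤ δ) (hkm : k ≤ m * r) :
    k + (k - 1) / r * (δ - 1) ≤ m * (r + δ - 1) := by
  rcases Nat.eq_zero_or_pos k with rfl | hk
  · simp
  set s := (k - 1) / r
  have hsr : k - 1 < s * r + r := Nat.lt_div_mul_add hr
  have hsm : s + 1 ≤ m := Nat.div_lt_of_lt_mul (by rw [Nat.mul_comm]; omega)
  calc k + s * (δ - 1) ≤ (s + 1) * (r + δ - 1) := by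
        rw [show r + δ - 1 = r + (δ - 1) by omega, Nat.mul_add, Nat.add_one_mul]
        have := Nat.mul_le_mul_right (δ - 1) (Nat.le_add_right s 1)
        omega
    _ ≤ m * (r + δ - 1) := Nat.mul_le_mul_right _ hsm

section CodeProperties

variable {F : Type} [Field F] {n m r δ k : ℕ} {c : Fin n → Fin k → F}
  (hc : IsGoodUpTo m r δ c n)
include hc

lemma IsGoodUpTo.span_eq_top (hn : n = m * (r + δ - 1)) (hδ : 2 ≤ δ) (hr : 1 ≤ r)
    {Z : Finset (Fin n)} (hZ : k + (k - 1) / r * (δ - 1) ≤ #Z) : span F (c '' Z) = ⊤ := by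
  set s := (k - 1) / r
  have hsr : s * r ≤ k - 1 := Nat.div_mul_le_self _ _
  have hsr' : k - 1 < s * r + r := Nat.lt_div_mul_add hr
  have hsplit : s * (r + δ - 1) = s * r + s * (δ - 1) := by rw [← Nat.mul_add]; congr 1; omega
  obtain ⟨U, hUZ, hUcap, hU⟩ := exists_isCapped_subset hn hδ (s := s) (e := k - s * r) (Z := Z)
    (by omega) (by omega)
  rw [show s * r + (k - s * r) = k by omega] at hU
  refine eq_top_iff.mpr (le_of_eq_of_le ?_ (span_mono (Set.image_mono (coe_subset.mpr hUZ))))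
  exact ((hc.linearIndepOn U (fun i _ => i.isLt) hUcap hU.le).span_image_eq_top_s12
    (by rw [hU, finrank_fin_fun])).symm

lemma IsGoodUpTo.finrank_range_evalMap (hn : n = m * (r + δ - 1)) (hδ : 2 ≤ δ) (hr : 1 ≤ r)
    (hkm : k ≤ m * r) :
    finrank F (LinearMap.range (evalMap F c)) = k := by
  rw [_root_.finrank_range_evalMap, finrank_fin_fun]
  simpa using hc.span_eq_top hn hδ hr (Z := univ)
    (by rw [card_univ, Fintype.card_fin, hn]; exact add_pred_div_mul_le hr (by omega) hkm)

lemma IsGoodUpTo.span_ne_top (hr : 1 ≤ r) (hk : 0 < k) :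
    span F (c '' ↑({i | grp m r δ i < (k - 1) / r ∨ (i : ℕ) < k - 1} : Finset (Fin n))) ≠ ⊤ := by
  set D : Finset (Fin n) := {i | (i : ℕ) < k - 1}
  have hD : span F (c '' D) ≠ ⊤ := by
    refine span_image_ne_top c ?_
    rw [Fin.card_filter_val_lt, finrank_fin_fun]
    omega
  refine ne_top_of_le_ne_top hD (span_le.mpr ?_)
  rintro _ ⟨i, hi, rfl⟩
  rcases (mem_filter.mp hi).2 with hi | hi
  · refine span_mono (Set.image_mono fun i' hi' => ?_) (hc.mem_span i i.isLt)
    have hi'r : (i' : ℕ) < (k - 1) / r * r :=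
      (Nat.div_lt_iff_lt_mul hr).mp ((mem_dataCols.mp hi').2 ▸ hi)
    exact mem_filter.mpr ⟨mem_univ _, hi'r.trans_le (Nat.div_mul_le_self _ _)⟩
  · exact subset_span ⟨i, mem_filter.mpr ⟨mem_univ _, hi⟩, rfl⟩

lemma IsGoodUpTo.isLRC [DecidableEq F] (hn : n = m * (r + δ - 1)) (hδ : 2 ≤ δ) (hrk : r ≤ k) :
    IsLRC (LinearMap.range (evalMap F c)) r δ := by
  have hmr := mul_le_of_eq_mul_add_sub_one hn hδ
  intro i₀
  set B : Finset (Fin n) := {i | grp m r δ i = grp m r δ i₀}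
  have hB : #B = r + δ - 1 := card_grp_eq hn hδ (grp_lt hn hδ i₀)
  refine ⟨B, by simp [B], hB.le, ?_⟩
  rintro _ ⟨φ, rfl⟩ ⟨i₁, hi₁, hne⟩
  by_contra! hlt
  have hzeros : r ≤ #{i ∈ B | φ (c i) = 0} := by
    have : #{i ∈ B | φ (c i) = 0} + #{i ∈ B | evalMap F c φ i ≠ 0} = #B :=
      card_filter_add_card_filter_not _
    omega
  obtain ⟨Z, hZB, hZ⟩ := exists_subset_card_eq hzeros
  set D := span F (c '' ↑(dataCols n m r (grp m r δ i₀)))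
  have hBD : ∀ i ∈ B, c i ∈ D := fun i hi => by
    have := hc.mem_span i i.isLt
    rwa [(mem_filter.mp hi).2] at this
  have hZD : span F (c '' Z) = D := by
    refine eq_of_le_of_finrank_le (span_le.mpr ?_) ?_
    · rintro _ ⟨i, hi, rfl⟩
      exact hBD i (filter_subset _ _ (hZB hi))
    · rw [(hc.linearIndepOn Z (fun i _ => i.isLt) (isCapped_of_card_le fun _ => hZ.le)
        (hZ.le.trans hrk)).finrank_span_image, hZ]
      exact (finrank_span_image_le c _).trans (card_dataCols hmr (grp_lt hn hδ i₀)).le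
  exact hne (span_image_le_ker (fun i hi => (mem_filter.mp (hZB hi)).2) (hZD ▸ hBD i₁ hi₁))

lemma IsGoodUpTo.isMinDist [DecidableEq F] (hn : n = m * (r + δ - 1)) (hδ : 2 ≤ δ) (hr : 1 ≤ r)
    (hrk : r ≤ k) (hkm : k ≤ m * r) :
    IsMinDist (LinearMap.range (evalMap F c)) (n + 1 - (k + (k - 1) / r * (δ - 1))) := by
  have hsr : (k - 1) / r * r ≤ k - 1 := Nat.div_mul_le_self _ _
  have hsm : (k - 1) / r ≤ m := (Nat.div_le_div_right (by omega : k - 1 ≤ m * r)).trans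
    (Nat.mul_div_cancel m (by omega)).le
  have hsplit : (k - 1) / r * (r + δ - 1) = (k - 1) / r * r + (k - 1) / r * (δ - 1) := by
    rw [← Nat.mul_add]; congr 1; omega
  have hR := card_grp_lt_or_lt hn hδ hsm hsr (by omega : k - 1 ≤ m * r)
  simpa using isMinDist_range_evalMap (c := c)
    (by rw [Fintype.card_fin, hn]; exact add_pred_div_mul_le hr (by omega) hkm)
    (fun Z hZ => hc.span_eq_top hn hδ hr hZ) _ (by omega) (hc.span_ne_top hr (by omega))

end CodeProperties

theorem statement12_general {n k r δ : ℕ} (hr1 : 1 ≤ r)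
    (hrk : r ≤ k) (hδ : 2 ≤ δ)
    (hdvd : (r + δ - 1) ∣ n) (hnr : k * (r + δ - 1) ≤ n * r) :
    ∀ (F : Type) [Field F] [Fintype F] [DecidableEq F],
      n.choose (k - 1) ≤ Fintype.card F →
      ∃ C : Submodule F (Fin n → F), IsOptimalLRC C k r δ := by
  intro F _ _ _ hq
  obtain ⟨m, hm⟩ := hdvd
  have hn : n = m * (r + δ - 1) := by rw [hm, Nat.mul_comm]
  have hkm : k ≤ m * r := Nat.le_of_mul_le_mul_right
    (hnr.trans_eq (by rw [hn, Nat.mul_right_comm])) (by omega : 0 < r + δ - 1)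
  obtain ⟨c, hc⟩ := exists_isGoodUpTo (F := F) hn hδ hr1 hrk hkm hq
  refine ⟨LinearMap.range (evalMap F c), hc.finrank_range_evalMap hn hδ hr1 hkm,
    hc.isLRC hn hδ hrk, _, hc.isMinDist hn hδ hr1 hrk hkm, ?_⟩
  have hceil : (k + r - 1) / r = (k - 1) / r + 1 := by
    rw [show k + r - 1 = k - 1 + r by omega, Nat.add_div_right _ hr1]
  have hK := add_pred_div_mul_le (δ := δ) hr1 (by omega) hkm
  rw [← hn] at hK
  rw [hceil, Nat.cast_sub (by omega), Nat.cast_add, Nat.cast_add, Nat.cast_mul,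
    Nat.cast_sub (by omega : 1 ≤ δ)]
  push_cast
  ring

/-- Theorem `opt-ext-1`: if `(r+δ-1) ∣ n` and `n·r ≥ k·(r+δ-1)`, then over
every finite field of size at least `C(n, k-1)` there exists an optimal `(r,δ)_a`
linear code of length `n` and dimension `k`. -/
theorem statement12 {n k r δ : ℕ} (hk1 : 1 ≤ k) (hkn : k ≤ n) (hr1 : 1 ≤ r)
    (hrk : r ≤ k) (hδ : 2 ≤ δ)
    (hdvd : (r + δ - 1) ∣ n) (hnr : k * (r + δ - 1) ≤ n * r) :
    ∀ (F : Type) [Field F] [Fintype F] [DecidableEq F],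
      n.choose (k - 1) ≤ Fintype.card F →
      ∃ C : Submodule F (Fin n → F), IsOptimalLRC C k r δ :=
  statement12_general hr1 hrk hδ hdvd hnr
end

section
/- Let S = {S_1,...,S_t} be an (A,Ψ)-frame over [n] (with parameters r ≥ 1, δ ≥ 2, partition {A_1,...,A_α, B} of [t], and Ψ = {ξ_1,...,ξ_α} ⊆ [n]), and let k ≥ 1 with r ≤ k. Suppose t ≥ ⌈k/r⌉ and that for every subset J ⊆ [t] with |J| = ⌈k/r⌉ one has |∪_{i∈J} S_i| ≥ k + ⌈k/r⌉(δ−1). Then: (1) every subset T ⊆ [n] with |T| ≥ k + (⌈k/r⌉−1)(δ−1) contains a subset S that is an (S,r,k)-core; (2) for every i ∈ [t] and every r-element subset I ⊆ S_i, there exists an (S,r,k)-core S with I ⊆ S. -/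
/-- `S = {S_1,…,S_t}` is an `(A,Ψ)`-frame over `[n]`, with blocks `A_1,…,A_a, B`
partitioning `[t]` and `Ψ = {ξ_1,…,ξ_a} ⊆ [n]`. -/
def IsFrame {n t a : ℕ} (r δ : ℕ) (S : Fin t → Finset (Fin n))
    (A : Fin a → Finset (Fin t)) (B : Finset (Fin t)) (ξ : Fin a → Fin n) : Prop :=
  (∀ i : Fin t, (S i).card = r + δ - 1) ∧
  -- {A_1,…,A_a, B} is a partition of [t]
  (∀ j₁ j₂ : Fin a, j₁ ≠ j₂ → Disjoint (A j₁) (A j₂)) ∧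
  (∀ j : Fin a, Disjoint (A j) B) ∧
  ((Finset.univ.biUnion A) ∪ B = Finset.univ) ∧
  -- frame condition (1): ∩_{ℓ∈A_j} S_ℓ = {ξ_j}, and the S_i \ {ξ_j}, i ∈ A_j, are disjoint
  (∀ j : Fin a, ∀ x : Fin n, (∀ ℓ ∈ A j, x ∈ S ℓ) ↔ x = ξ j) ∧
  (∀ j : Fin a, ∀ i₁ ∈ A j, ∀ i₂ ∈ A j, i₁ ≠ i₂ →
    Disjoint (S i₁ \ {ξ j}) (S i₂ \ {ξ j})) ∧
  -- frame condition (2): the ∪_{ℓ∈A_j} S_ℓ together with the S_j, j ∈ B, partition [n]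
  (∀ j₁ j₂ : Fin a, j₁ ≠ j₂ → Disjoint ((A j₁).biUnion S) ((A j₂).biUnion S)) ∧
  (∀ j : Fin a, ∀ i ∈ B, Disjoint ((A j).biUnion S) (S i)) ∧
  (∀ i₁ ∈ B, ∀ i₂ ∈ B, i₁ ≠ i₂ → Disjoint (S i₁) (S i₂)) ∧
  (Finset.univ.biUnion S = Finset.univ)

/-- `T` is an `(S,r)`-core. -/
def IsCore {n t a : ℕ} (S : Fin t → Finset (Fin n))
    (A : Fin a → Finset (Fin t)) (B : Finset (Fin t)) (ξ : Fin a → Fin n)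
    (r : ℕ) (T : Finset (Fin n)) : Prop :=
  (∀ j : Fin a, ξ j ∈ T → ∀ i ∈ A j, (T ∩ S i).card ≤ r) ∧
  (∀ j : Fin a, ξ j ∉ T → ∃ ij ∈ A j, (T ∩ S ij).card ≤ r ∧
    ∀ i ∈ A j, i ≠ ij → (T ∩ S i).card ≤ r - 1) ∧
  (∀ i ∈ B, (T ∩ S i).card ≤ r)

/-!
Outside `Ψ` the sets `S_i` are pairwise disjoint, so whether `T` is a core can be read off the
points of `Ψ` it contains and the numbers `|T ∩ (S_i \ Ψ)|`: these must be at most `r`, and at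
most `r - 1` except for `i ∈ B` and for one designated index in each block `A_j` whose `ξ_j` is
missing from `T`. Cutting each
`T ∩ (S_i \ Ψ)` down to this capacity turns any `T` into a core `T' ⊆ T`.

Every index at which the cut is active loses at most `δ - 1` points. If fewer than `⌈k/r⌉`
indices have `|T ∩ (S_i \ Ψ)| ≥ r`, the cut loses at most `(⌈k/r⌉ - 1)(δ - 1)` points. Otherwise
these indices `J` are all filled to capacity, so `⋃_{i ∈ J} S_i` has at most `|J|(δ - 1)` points
outside `T'`, and the hypothesis on unions (which propagates from `⌈k/r⌉` to larger `J`, each new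
`S_i` adding at least `δ - 1` fresh points) leaves `k` points in `T'`. For (2) one cuts
`I ∪ ⋃_{i' ∈ J \ {i}} (S_{i'} \ S_i)` for some `J ∋ i` of size `⌈k/r⌉`, designating `i` in its
block, so that exactly the points of `I` survive in `S_i`.
-/

open Finset

def reduced {n t a : ℕ} (S : Fin t → Finset (Fin n)) (ξ : Fin a → Fin n) (i : Fin t) :
    Finset (Fin n) :=
  S i \ univ.image ξ

section Frame

variable {n t a r δ : ℕ} {S : Fin t → Finset (Fin n)} {A : Fin a → Finset (Fin t)}
  {B : Finset (Fin t)} {ξ : Fin a → Fin n} {i i' : Fin t} {j j' : Fin a}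

theorem IsFrame.mem_B_or_exists_mem_A (hf : IsFrame r δ S A B ξ) (i : Fin t) :
    i ∈ B ∨ ∃ j, i ∈ A j := by
  have hi : i ∈ univ.biUnion A ∪ B := hf.2.2.2.1 ▸ mem_univ i
  simpa [or_comm] using hi

theorem IsFrame.eq_of_mem_A (hf : IsFrame r δ S A B ξ) (hi : i ∈ A j) (hi' : i ∈ A j') :
    j = j' :=
  by_contra fun hne => disjoint_left.mp (hf.2.1 j j' hne) hi hi'

theorem IsFrame.notMem_B (hf : IsFrame r δ S A B ξ) (hi : i ∈ A j) : i ∉ B :=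
  disjoint_left.mp (hf.2.2.1 j) hi

theorem IsFrame.xi_mem (hf : IsFrame r δ S A B ξ) (hi : i ∈ A j) : ξ j ∈ S i :=
  (hf.2.2.2.2.1 j (ξ j)).mpr rfl i hi

theorem IsFrame.exists_eq_xi_of_mem_of_mem (hf : IsFrame r δ S A B ξ) {x : Fin n}
    (hii' : i ≠ i') (hx : x ∈ S i) (hx' : x ∈ S i') : ∃ j, i ∈ A j ∧ i' ∈ A j ∧ x = ξ j := by
  have hBA : ∀ {i i' j}, i ∈ B → i' ∈ A j → x ∈ S i → x ∈ S i' → False :=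
    fun hi hi' hx hx' => disjoint_left.mp (hf.2.2.2.2.2.2.2.1 _ _ hi)
      (mem_biUnion.mpr ⟨_, hi', hx'⟩) hx
  rcases hf.mem_B_or_exists_mem_A i with hi | ⟨j, hi⟩ <;>
    rcases hf.mem_B_or_exists_mem_A i' with hi' | ⟨j', hi'⟩
  · exact absurd hx' (disjoint_left.mp (hf.2.2.2.2.2.2.2.2.1 i hi i' hi' hii') hx)
  · exact (hBA hi hi' hx hx').elim
  · exact (hBA hi' hi hx' hx).elim
  · obtain rfl | hjj' := eq_or_ne j j'
    · refine ⟨j, hi, hi', by_contra fun hne => ?_⟩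
      exact disjoint_left.mp (hf.2.2.2.2.2.1 j i hi i' hi' hii')
        (mem_sdiff.mpr ⟨hx, by simpa using hne⟩) (mem_sdiff.mpr ⟨hx', by simpa using hne⟩)
    · exact disjoint_left.mp (hf.2.2.2.2.2.2.1 j j' hjj') (mem_biUnion.mpr ⟨i, hi, hx⟩)
        (mem_biUnion.mpr ⟨i', hi', hx'⟩) |>.elim

theorem IsFrame.nonempty_A (hf : IsFrame r δ S A B ξ) (hn : 1 < n) (j : Fin a) :
    (A j).Nonempty := by
  by_contra hA
  have hall : ∀ x, x = ξ j := fun x => (hf.2.2.2.2.1 j x).mp fun ℓ hℓ => (hA ⟨ℓ, hℓ⟩).elim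
  exact absurd ((hall ⟨0, by omega⟩).trans (hall ⟨1, hn⟩).symm) (by simp)

theorem IsFrame.mem_A_of_xi_mem (hf : IsFrame r δ S A B ξ) (hA : ∀ j, (A j).Nonempty)
    (h : ξ j ∈ S i) : i ∈ A j := by
  obtain ⟨ℓ, hℓ⟩ := hA j
  obtain rfl | hne := eq_or_ne i ℓ
  · exact hℓ
  · obtain ⟨j', hi, hℓ', -⟩ := hf.exists_eq_xi_of_mem_of_mem hne h (hf.xi_mem hℓ)
    rwa [hf.eq_of_mem_A hℓ hℓ']

theorem reduced_subset (i : Fin t) : reduced S ξ i ⊆ S i := sdiff_subset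

theorem xi_notMem_reduced : ξ j ∉ reduced S ξ i := by
  simp [reduced]

theorem IsFrame.disjoint_reduced (hf : IsFrame r δ S A B ξ) (h : i ≠ i') :
    Disjoint (reduced S ξ i) (S i') :=
  disjoint_left.mpr fun x hx hx' => by
    obtain ⟨j, -, -, rfl⟩ := hf.exists_eq_xi_of_mem_of_mem h (reduced_subset i hx) hx'
    exact xi_notMem_reduced hx

theorem IsFrame.subset_insert_reduced (hf : IsFrame r δ S A B ξ) (hA : ∀ j, (A j).Nonempty)
    (hi : i ∈ A j) : S i ⊆ insert (ξ j) (reduced S ξ i) := by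
  intro x hx
  by_cases hxξ : x ∈ univ.image ξ
  · obtain ⟨j', -, rfl⟩ := mem_image.mp hxξ
    rw [hf.eq_of_mem_A (hf.mem_A_of_xi_mem hA hx) hi]
    exact mem_insert_self _ _
  · exact mem_insert_of_mem (mem_sdiff.mpr ⟨hx, hxξ⟩)

theorem IsFrame.reduced_eq_of_mem_B (hf : IsFrame r δ S A B ξ) (hA : ∀ j, (A j).Nonempty)
    (hi : i ∈ B) : reduced S ξ i = S i := by
  refine (reduced_subset i).antisymm fun x hx => mem_sdiff.mpr ⟨hx, fun hxξ => ?_⟩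
  obtain ⟨j, -, rfl⟩ := mem_image.mp hxξ
  exact hf.notMem_B (hf.mem_A_of_xi_mem hA hx) hi

theorem IsFrame.card_reduced_le (hf : IsFrame r δ S A B ξ) (i : Fin t) :
    (reduced S ξ i).card ≤ r + δ - 1 :=
  hf.1 i ▸ card_le_card (reduced_subset i)

theorem IsFrame.card_reduced_add_one_le (hf : IsFrame r δ S A B ξ) (hi : i ∈ A j) :
    (reduced S ξ i).card + 1 ≤ r + δ - 1 := by
  rw [← hf.1 i, ← card_insert_of_notMem xi_notMem_reduced]
  exact card_le_card (insert_subset (hf.xi_mem hi) (reduced_subset i))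

theorem IsFrame.le_card_reduced_add_one (hf : IsFrame r δ S A B ξ) (hA : ∀ j, (A j).Nonempty)
    (i : Fin t) : r + δ - 1 ≤ (reduced S ξ i).card + 1 := by
  rw [← hf.1 i]
  rcases hf.mem_B_or_exists_mem_A i with hi | ⟨j, hi⟩
  · rw [hf.reduced_eq_of_mem_B hA hi]
    omega
  · exact (card_le_card (hf.subset_insert_reduced hA hi)).trans (card_insert_le _ _)

theorem IsFrame.card_le_card_filter_add_sum (hf : IsFrame r δ S A B ξ) (X : Finset (Fin n)) :
    X.card ≤ (univ.filter fun j => ξ j ∈ X).card + ∑ i, (X ∩ reduced S ξ i).card := by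
  have hX : X ⊆ (univ.filter fun j => ξ j ∈ X).image ξ ∪
      univ.biUnion fun i => X ∩ reduced S ξ i := by
    intro x hx
    by_cases hxξ : x ∈ univ.image ξ
    · obtain ⟨j, -, rfl⟩ := mem_image.mp hxξ
      exact mem_union_left _ (mem_image_of_mem _ (mem_filter.mpr ⟨mem_univ _, hx⟩))
    · have hxS : x ∈ univ.biUnion S := hf.2.2.2.2.2.2.2.2.2 ▸ mem_univ x
      obtain ⟨i, -, hxi⟩ := mem_biUnion.mp hxS
      exact mem_union_right _ (mem_biUnion.mpr
        ⟨i, mem_univ i, mem_inter.mpr ⟨hx, mem_sdiff.mpr ⟨hxi, hxξ⟩⟩⟩)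
  exact (card_le_card hX).trans
    ((card_union_le _ _).trans (add_le_add card_image_le card_biUnion_le))

theorem IsFrame.card_biUnion_le_card_add (hf : IsFrame r δ S A B ξ) (hA : ∀ j, (A j).Nonempty)
    {d : Fin a → Fin t} (hd : ∀ j, d j ∈ A j) {J : Finset (Fin t)} {T : Finset (Fin n)}
    (hJ : ∀ i ∈ J, (reduced S ξ i \ T).card ≤ δ - 1)
    (hdJ : ∀ j, ∀ i ∈ J, i ∈ A j → ξ j ∉ T →
      d j ∈ J ∧ (reduced S ξ (d j) \ T).card < δ - 1) :
    (J.biUnion S).card ≤ T.card + J.card * (δ - 1) := by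
  set X := J.biUnion S
  set V := univ.filter fun j => ξ j ∈ X \ T
  have hV : ∀ j ∈ V, d j ∈ J ∧ (reduced S ξ (d j) \ T).card < δ - 1 := by
    intro j hj
    obtain ⟨hjX, hjT⟩ := mem_sdiff.mp (mem_filter.mp hj).2
    obtain ⟨i, hiJ, hi⟩ := mem_biUnion.mp hjX
    exact hdJ j i hiJ (hf.mem_A_of_xi_mem hA hi) hjT
  have hVJ : V.image d ⊆ J := image_subset_iff.mpr fun j hj => (hV j hj).1
  have hVcard : (V.image d).card = V.card :=
    card_image_of_injOn fun j _ j' _ h => hf.eq_of_mem_A (hd j) (h ▸ hd j')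
  -- the points of `X` outside `Ψ` lie in the reduced sets of the indices in `J`
  have hsum : ∑ i, ((X \ T) ∩ reduced S ξ i).card ≤ ∑ i ∈ J, (reduced S ξ i \ T).card := by
    rw [← sum_subset (subset_univ J)]
    · refine sum_le_sum fun i _ => card_le_card fun x hx => ?_
      obtain ⟨hxXT, hxi⟩ := mem_inter.mp hx
      exact mem_sdiff.mpr ⟨hxi, (mem_sdiff.mp hxXT).2⟩
    · intro i _ hiJ
      refine card_eq_zero.mpr (eq_empty_of_forall_notMem fun x hx => ?_)
      obtain ⟨hxXT, hxi⟩ := mem_inter.mp hx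
      obtain ⟨i', hi'J, hxi'⟩ := mem_biUnion.mp (mem_sdiff.mp hxXT).1
      exact disjoint_left.mp (hf.disjoint_reduced (ne_of_mem_of_not_mem hi'J hiJ).symm) hxi hxi'
  -- each block with `ξ j` missing from `T` is paid for by its designated index `d j ∈ J`
  have hcharge : ∑ i ∈ J, (reduced S ξ i \ T).card + (V.image d).card ≤ J.card * (δ - 1) := by
    rw [← inter_eq_right.mpr hVJ, card_eq_sum_ones, ← sum_ite_mem, ← sum_add_distrib,
      ← smul_eq_mul]
    refine sum_le_card_nsmul _ _ _ fun i hi => ?_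
    split_ifs with hiV
    · obtain ⟨j, hj, rfl⟩ := mem_image.mp hiV
      exact (hV j hj).2
    · simpa using hJ i hi
  have hXT : (X \ T).card ≤ V.card + ∑ i, ((X \ T) ∩ reduced S ξ i).card :=
    hf.card_le_card_filter_add_sum _
  have := card_le_card_sdiff_add_card (s := X) (t := T)
  omega

theorem IsFrame.add_mul_le_card_biUnion (hf : IsFrame r δ S A B ξ) (hA : ∀ j, (A j).Nonempty)
    (hr : 1 ≤ r) {k m : ℕ}
    (hJ : ∀ J : Finset (Fin t), J.card = m → k + m * (δ - 1) ≤ (J.biUnion S).card)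
    {J : Finset (Fin t)} (hmJ : m ≤ J.card) : k + J.card * (δ - 1) ≤ (J.biUnion S).card := by
  obtain ⟨J₀, hJ₀J, rfl⟩ := exists_subset_card_eq hmJ
  have hdisj : Disjoint (J₀.biUnion S) ((J \ J₀).biUnion (reduced S ξ)) := by
    refine (disjoint_biUnion_left _ _ _).mpr fun i hi =>
      (disjoint_biUnion_right _ _ _).mpr fun i' hi' => ?_
    exact (hf.disjoint_reduced (ne_of_mem_of_not_mem hi (mem_sdiff.mp hi').2).symm).symm
  have hpair : (↑(J \ J₀) : Set (Fin t)).PairwiseDisjoint (reduced S ξ) :=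
    fun i _ i' _ h => (hf.disjoint_reduced h).mono_right (reduced_subset i')
  have hrest : (J \ J₀).card * (δ - 1) ≤ ((J \ J₀).biUnion (reduced S ξ)).card := by
    rw [card_biUnion hpair, ← smul_eq_mul]
    refine card_nsmul_le_sum _ _ _ fun i _ => ?_
    have := hf.le_card_reduced_add_one hA i
    omega
  have hsub : J₀.biUnion S ∪ (J \ J₀).biUnion (reduced S ξ) ⊆ J.biUnion S :=
    union_subset (biUnion_subset_biUnion_of_subset_left _ hJ₀J)
      (biUnion_subset.mpr fun i hi => (reduced_subset i).trans
        (subset_biUnion_of_mem S (mem_sdiff.mp hi).1))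
  have hJcard := card_sdiff_add_card_eq_card hJ₀J
  calc k + J.card * (δ - 1) = (k + J₀.card * (δ - 1)) + (J \ J₀).card * (δ - 1) := by
        rw [← hJcard]; ring
    _ ≤ (J₀.biUnion S).card + ((J \ J₀).biUnion (reduced S ξ)).card :=
        add_le_add (hJ J₀ rfl) hrest
    _ = _ := (card_union_of_disjoint hdisj).symm
    _ ≤ _ := card_le_card hsub

end Frame

/-- How many points of `reduced S ξ i` a core `T` may contain when, for each block `j` with
`ξ j ∉ T`, the index `d j` plays the role of `i_j` in clause (ii). -/
def capacity {n t a : ℕ} (B : Finset (Fin t)) (ξ : Fin a → Fin n) (r : ℕ) (d : Fin a → Fin t)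
    (T : Finset (Fin n)) (i : Fin t) : ℕ :=
  if i ∈ B ∨ ∃ j, ξ j ∉ T ∧ d j = i then r else r - 1

structure IsTruncation {n t a : ℕ} (S : Fin t → Finset (Fin n)) (ξ : Fin a → Fin n)
    (c : Fin t → ℕ) (T T' : Finset (Fin n)) : Prop where
  subset : T' ⊆ T
  xi_mem_iff : ∀ j, ξ j ∈ T' ↔ ξ j ∈ T
  card_inter_reduced : ∀ i, (T' ∩ reduced S ξ i).card = min (T ∩ reduced S ξ i).card (c i)

section Truncation

variable {n t a r δ : ℕ} {S : Fin t → Finset (Fin n)} {A : Fin a → Finset (Fin t)}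
  {B : Finset (Fin t)} {ξ : Fin a → Fin n} {d : Fin a → Fin t} {c : Fin t → ℕ}
  {T T' : Finset (Fin n)} {i : Fin t} {j : Fin a} {k m : ℕ}

theorem capacity_le : capacity B ξ r d T i ≤ r := by
  unfold capacity; split <;> omega

theorem sub_one_le_capacity : r - 1 ≤ capacity B ξ r d T i := by
  unfold capacity; split <;> omega

theorem capacity_of_mem_B (hi : i ∈ B) : capacity B ξ r d T i = r :=
  if_pos (Or.inl hi)

theorem capacity_of_xi_notMem (hj : ξ j ∉ T) : capacity B ξ r d T (d j) = r :=
  if_pos (Or.inr ⟨j, hj, rfl⟩)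

theorem IsFrame.capacity_of_mem_A (hf : IsFrame r δ S A B ξ) (hd : ∀ j, d j ∈ A j)
    (hi : i ∈ A j) (h : ξ j ∈ T ∨ i ≠ d j) : capacity B ξ r d T i = r - 1 := by
  refine if_neg (not_or.mpr ⟨hf.notMem_B hi, ?_⟩)
  rintro ⟨j', hj', rfl⟩
  obtain rfl := hf.eq_of_mem_A hi (hd j')
  tauto

theorem IsFrame.card_reduced_le_capacity_add (hf : IsFrame r δ S A B ξ) (i : Fin t) :
    (reduced S ξ i).card ≤ capacity B ξ r d T i + (δ - 1) := by
  have := hf.card_reduced_le i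
  by_cases h : i ∈ B ∨ ∃ j, ξ j ∉ T ∧ d j = i
  · rw [capacity, if_pos h]
    omega
  · obtain ⟨j, hi⟩ := (hf.mem_B_or_exists_mem_A i).resolve_left fun hB => h (Or.inl hB)
    have := hf.card_reduced_add_one_le hi
    rw [capacity, if_neg h]
    omega

theorem IsFrame.isCore_of_card_inter_reduced_le (hf : IsFrame r δ S A B ξ)
    (hA : ∀ j, (A j).Nonempty) (hr : 1 ≤ r) (hd : ∀ j, d j ∈ A j)
    (hT : ∀ i, (T ∩ reduced S ξ i).card ≤ capacity B ξ r d T i) : IsCore S A B ξ r T := by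
  have hins : ∀ {i j}, i ∈ A j → T ∩ S i ⊆ insert (ξ j) (T ∩ reduced S ξ i) := by
    intro i j hi x hx
    obtain ⟨hxT, hxS⟩ := mem_inter.mp hx
    rcases mem_insert.mp (hf.subset_insert_reduced hA hi hxS) with rfl | hxr
    · exact mem_insert_self _ _
    · exact mem_insert_of_mem (mem_inter.mpr ⟨hxT, hxr⟩)
  refine ⟨fun j hj i hi => ?_, fun j hj => ⟨d j, hd j, ?_, fun i hi hne => ?_⟩, fun i hi => ?_⟩
  · have := (card_le_card (hins hi)).trans (card_insert_le _ _)
    have := hT i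
    rw [hf.capacity_of_mem_A hd hi (Or.inl hj)] at this
    omega
  · have hsub : T ∩ S (d j) ⊆ T ∩ reduced S ξ (d j) := by
      intro x hx
      refine (mem_insert.mp (hins (hd j) hx)).resolve_left ?_
      rintro rfl
      exact hj (mem_inter.mp hx).1
    exact (card_le_card hsub).trans ((hT _).trans capacity_le)
  · have hsub : T ∩ S i ⊆ T ∩ reduced S ξ i := by
      intro x hx
      refine (mem_insert.mp (hins hi hx)).resolve_left ?_
      rintro rfl
      exact hj (mem_inter.mp hx).1
    exact (card_le_card hsub).trans ((hT i).trans_eq (hf.capacity_of_mem_A hd hi (Or.inr hne)))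
  · rw [← hf.reduced_eq_of_mem_B hA hi]
    exact (hT i).trans capacity_le

theorem IsCore.mono (hf : IsFrame r δ S A B ξ) (hA : ∀ j, (A j).Nonempty)
    (hT : IsCore S A B ξ r T) (h : T' ⊆ T) : IsCore S A B ξ r T' := by
  obtain ⟨hin, hout, hB⟩ := hT
  have hle : ∀ i, (T' ∩ S i).card ≤ (T ∩ S i).card :=
    fun i => card_le_card (inter_subset_inter_right h)
  refine ⟨fun j hj i hi => (hle i).trans (hin j (h hj) i hi), fun j hj => ?_,
    fun i hi => (hle i).trans (hB i hi)⟩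
  by_cases hjT : ξ j ∈ T
  · have hlt : ∀ i ∈ A j, (T' ∩ S i).card ≤ r - 1 := by
      intro i hi
      have hss : T' ∩ S i ⊂ T ∩ S i :=
        (ssubset_iff_of_subset (inter_subset_inter_right h)).mpr
          ⟨ξ j, mem_inter.mpr ⟨hjT, hf.xi_mem hi⟩, fun hx => hj (mem_inter.mp hx).1⟩
      have := card_lt_card hss
      have := hin j hjT i hi
      omega
    obtain ⟨ℓ, hℓ⟩ := hA j
    exact ⟨ℓ, hℓ, (hlt ℓ hℓ).trans (Nat.sub_le r 1), fun i hi _ => hlt i hi⟩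
  · obtain ⟨ij, hij, hijr, hrest⟩ := hout j hjT
    exact ⟨ij, hij, (hle ij).trans hijr, fun i hi hne => (hle i).trans (hrest i hi hne)⟩

theorem IsFrame.exists_isTruncation (hf : IsFrame r δ S A B ξ) (c : Fin t → ℕ)
    (T : Finset (Fin n)) : ∃ T', IsTruncation S ξ c T T' := by
  choose E hET hE using fun i =>
    exists_subset_card_eq (min_le_left (T ∩ reduced S ξ i).card (c i))
  have hsub : T.filter (· ∈ univ.image ξ) ∪ univ.biUnion E ⊆ T :=
    union_subset (filter_subset _ _) (biUnion_subset.mpr fun i _ => (hET i).trans inter_subset_left)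
  refine ⟨_, hsub, fun j => ⟨fun h => hsub h, fun h => mem_union_left _ ?_⟩, fun i => ?_⟩
  · exact mem_filter.mpr ⟨h, mem_image_of_mem _ (mem_univ j)⟩
  rw [← hE i]
  congr 1
  ext x
  refine ⟨fun hx => ?_, fun hx => ?_⟩
  · obtain ⟨hx, hxi⟩ := mem_inter.mp hx
    rcases mem_union.mp hx with hxξ | hxE
    · exact ((mem_sdiff.mp hxi).2 (mem_filter.mp hxξ).2).elim
    · obtain ⟨i', -, hxi'⟩ := mem_biUnion.mp hxE
      obtain rfl | hne := eq_or_ne i' i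
      · exact hxi'
      · have hxr := (mem_inter.mp (hET i' hxi')).2
        exact (disjoint_left.mp (hf.disjoint_reduced hne) hxr (reduced_subset i hxi)).elim
  · exact mem_inter.mpr ⟨mem_union_right _ (mem_biUnion.mpr ⟨i, mem_univ i, hx⟩),
      (mem_inter.mp (hET i hx)).2⟩

theorem IsTruncation.card_sdiff_add (h : IsTruncation S ξ c T T')
    (hi : c i ≤ (T ∩ reduced S ξ i).card) :
    (reduced S ξ i \ T').card + c i = (reduced S ξ i).card := by
  rw [← card_sdiff_add_card_inter (reduced S ξ i) T', inter_comm, h.card_inter_reduced,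
    min_eq_right hi]

theorem IsTruncation.inter_reduced_eq (h : IsTruncation S ξ c T T')
    (hi : (T ∩ reduced S ξ i).card ≤ c i) : T' ∩ reduced S ξ i = T ∩ reduced S ξ i :=
  eq_of_subset_of_card_le (inter_subset_inter_right h.subset)
    (by rw [h.card_inter_reduced, min_eq_left hi])

theorem IsTruncation.superset_of_card_inter_reduced_le (h : IsTruncation S ξ c T T')
    {I : Finset (Fin n)} (hIT : I ⊆ T) (hI : I ⊆ S i) (hi : (T ∩ reduced S ξ i).card ≤ c i) :
    I ⊆ T' := by
  intro x hx
  by_cases hxξ : x ∈ univ.image ξ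
  · obtain ⟨j, -, rfl⟩ := mem_image.mp hxξ
    exact (h.xi_mem_iff j).mpr (hIT hx)
  · have hxT : x ∈ T ∩ reduced S ξ i := mem_inter.mpr ⟨hIT hx, mem_sdiff.mpr ⟨hI hx, hxξ⟩⟩
    rw [← h.inter_reduced_eq hi] at hxT
    exact (mem_inter.mp hxT).1

theorem IsFrame.isCore_of_isTruncation (hf : IsFrame r δ S A B ξ) (hA : ∀ j, (A j).Nonempty)
    (hr : 1 ≤ r) (hd : ∀ j, d j ∈ A j) (h : IsTruncation S ξ (capacity B ξ r d T) T T') :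
    IsCore S A B ξ r T' := by
  have hcap : capacity B ξ r d T' = capacity B ξ r d T := by
    funext i
    simp only [capacity, h.xi_mem_iff]
  refine hf.isCore_of_card_inter_reduced_le hA hr hd fun i => ?_
  rw [h.card_inter_reduced, hcap]
  exact min_le_right _ _

theorem IsFrame.card_le_card_add_of_isTruncation (hf : IsFrame r δ S A B ξ)
    (h : IsTruncation S ξ c T T') (hc : ∀ i, (reduced S ξ i).card ≤ c i + (δ - 1)) :
    T.card ≤ T'.card + (univ.filter fun i => c i < (T ∩ reduced S ξ i).card).card * (δ - 1) := by
  have hξ : (univ.filter fun j => ξ j ∈ T \ T').card = 0 :=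
    card_eq_zero.mpr (filter_eq_empty_iff.mpr fun j _ hj =>
      (mem_sdiff.mp hj).2 ((h.xi_mem_iff j).mpr (mem_sdiff.mp hj).1))
  have hloss : ∀ i, ((T \ T') ∩ reduced S ξ i).card ≤
      if c i < (T ∩ reduced S ξ i).card then δ - 1 else 0 := by
    intro i
    have hcard : ((T \ T') ∩ reduced S ξ i).card =
        (T ∩ reduced S ξ i).card - (T' ∩ reduced S ξ i).card := by
      rw [← card_sdiff_of_subset (inter_subset_inter_right h.subset)]
      congr 1
      ext x
      simp only [mem_inter, mem_sdiff]
      tauto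
    have := card_le_card (inter_subset_right (s₁ := T) (s₂ := reduced S ξ i))
    have := hc i
    rw [hcard, h.card_inter_reduced]
    split_ifs <;> omega
  have hsum := sum_le_sum fun i (_ : i ∈ univ) => hloss i
  rw [← sum_filter, sum_const, smul_eq_mul] at hsum
  have := hf.card_le_card_filter_add_sum (T \ T')
  have := card_le_card_sdiff_add_card (s := T) (t := T')
  omega

theorem IsFrame.card_biUnion_le_of_isTruncation (hf : IsFrame r δ S A B ξ)
    (hA : ∀ j, (A j).Nonempty) (hd : ∀ j, d j ∈ A j) {J : Finset (Fin t)}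
    (h : IsTruncation S ξ (capacity B ξ r d T) T T')
    (hJ : ∀ i ∈ J, capacity B ξ r d T i ≤ (T ∩ reduced S ξ i).card)
    (hdJ : ∀ j, ∀ i ∈ J, i ∈ A j → ξ j ∉ T → d j ∈ J) :
    (J.biUnion S).card ≤ T'.card + J.card * (δ - 1) := by
  refine hf.card_biUnion_le_card_add hA hd (fun i hi => ?_) fun j i hi hij hjT => ?_
  · have := h.card_sdiff_add (hJ i hi)
    have := hf.card_reduced_le_capacity_add (d := d) (T := T) i
    omega
  · rw [h.xi_mem_iff] at hjT
    have hdj := hdJ j i hi hij hjT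
    have := h.card_sdiff_add (hJ _ hdj)
    rw [capacity_of_xi_notMem hjT] at this
    have := hf.card_reduced_add_one_le (hd j)
    exact ⟨hdj, by omega⟩

theorem IsFrame.exists_isCore_subset_le_card (hf : IsFrame r δ S A B ξ)
    (hA : ∀ j, (A j).Nonempty) (hr : 1 ≤ r)
    (hJ : ∀ J : Finset (Fin t), m ≤ J.card → k + J.card * (δ - 1) ≤ (J.biUnion S).card)
    {T : Finset (Fin n)} (hT : k + (m - 1) * (δ - 1) ≤ T.card) :
    ∃ T' ⊆ T, IsCore S A B ξ r T' ∧ k ≤ T'.card := by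
  choose d hd hdmax using fun j =>
    (A j).exists_max_image (fun i => (T ∩ reduced S ξ i).card) (hA j)
  obtain ⟨T', htr⟩ := hf.exists_isTruncation (capacity B ξ r d T) T
  refine ⟨T', htr.subset, hf.isCore_of_isTruncation hA hr hd htr, ?_⟩
  set D := univ.filter fun i => r ≤ (T ∩ reduced S ξ i).card
  rcases lt_or_ge D.card m with hDm | hDm
  · have hloss := hf.card_le_card_add_of_isTruncation htr hf.card_reduced_le_capacity_add
    have hcut : (univ.filter fun i => capacity B ξ r d T i < (T ∩ reduced S ξ i).card).card
        ≤ D.card := by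
      refine card_le_card fun i hi => mem_filter.mpr ⟨mem_univ i, ?_⟩
      have := (mem_filter.mp hi).2
      have : r - 1 ≤ capacity B ξ r d T i := sub_one_le_capacity
      omega
    have := Nat.mul_le_mul_right (δ - 1) (hcut.trans (Nat.le_sub_one_of_lt hDm))
    omega
  · have hcover := hf.card_biUnion_le_of_isTruncation hA hd htr (J := D)
      (fun i hi => capacity_le.trans (mem_filter.mp hi).2)
      fun j i hi hij _ => mem_filter.mpr ⟨mem_univ _, (mem_filter.mp hi).2.trans (hdmax j i hij)⟩
    have := hJ D hDm
    omega

theorem exists_designation (hA : ∀ j, (A j).Nonempty) (i₀ : Fin t) :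
    ∃ d : Fin a → Fin t, (∀ j, d j ∈ A j) ∧ ∀ j, i₀ ∈ A j → d j = i₀ := by
  refine ⟨fun j => if i₀ ∈ A j then i₀ else (hA j).choose, fun j => ?_, fun j h => if_pos h⟩
  by_cases h : i₀ ∈ A j
  · simp [h]
  · simpa [h] using (hA j).choose_spec

theorem IsFrame.card_inter_reduced_eq_capacity (hf : IsFrame r δ S A B ξ)
    (hA : ∀ j, (A j).Nonempty) {d : Fin a → Fin t} (hd : ∀ j, d j ∈ A j) {i₀ : Fin t}
    (hdi₀ : ∀ j, i₀ ∈ A j → d j = i₀) {I T : Finset (Fin n)} (hI : I ⊆ S i₀) (hIr : I.card = r)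
    (hIT : I ⊆ T) (hTI : ∀ j, i₀ ∈ A j → ξ j ∈ T → ξ j ∈ I) :
    (I ∩ reduced S ξ i₀).card = capacity B ξ r d T i₀ := by
  rcases hf.mem_B_or_exists_mem_A i₀ with hB | ⟨j₀, hj₀⟩
  · rw [hf.reduced_eq_of_mem_B hA hB, inter_eq_left.mpr hI, hIr, capacity_of_mem_B hB]
  have hIξ : I ⊆ insert (ξ j₀) (reduced S ξ i₀) := hI.trans (hf.subset_insert_reduced hA hj₀)
  by_cases hξI : ξ j₀ ∈ I
  · have hIr' : I ∩ reduced S ξ i₀ = I.erase (ξ j₀) := by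
      ext x
      simp only [mem_inter, mem_erase]
      refine ⟨fun ⟨hx, hxr⟩ => ⟨fun h => xi_notMem_reduced (h ▸ hxr), hx⟩, fun ⟨hne, hx⟩ => ?_⟩
      exact ⟨hx, (mem_insert.mp (hIξ hx)).resolve_left hne⟩
    rw [hIr', card_erase_of_mem hξI, hIr, hf.capacity_of_mem_A hd hj₀ (Or.inl (hIT hξI))]
  · have hIr' : I ∩ reduced S ξ i₀ = I := inter_eq_left.mpr fun x hx =>
      (mem_insert.mp (hIξ hx)).resolve_left fun h => hξI (h ▸ hx)
    rw [hIr', hIr, ← hdi₀ j₀ hj₀, capacity_of_xi_notMem fun h => hξI (hTI j₀ hj₀ h)]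

theorem IsFrame.exists_isCore_superset_le_card (hf : IsFrame r δ S A B ξ)
    (hA : ∀ j, (A j).Nonempty) (hr : 1 ≤ r) (hδ : 2 ≤ δ) (hm : 1 ≤ m) (hmt : m ≤ t)
    (hJ : ∀ J : Finset (Fin t), J.card = m → k + m * (δ - 1) ≤ (J.biUnion S).card)
    {i₀ : Fin t} {I : Finset (Fin n)} (hI : I ⊆ S i₀) (hIr : I.card = r) :
    ∃ T, IsCore S A B ξ r T ∧ k ≤ T.card ∧ I ⊆ T := by
  obtain ⟨J, hi₀J, hJm⟩ : ∃ J : Finset (Fin t), i₀ ∈ J ∧ J.card = m := by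
    obtain ⟨J, hJ, hJm⟩ := exists_superset_card_eq (s := {i₀}) (by simpa using hm)
      (by simpa using hmt)
    exact ⟨J, hJ (mem_singleton_self i₀), hJm⟩
  obtain ⟨d, hd, hdi₀⟩ := exists_designation hA i₀
  set T := I ∪ ((J.erase i₀).biUnion S \ S i₀)
  have hmemT : ∀ {i x}, i ∈ J → i ≠ i₀ → x ∈ S i → x ∉ S i₀ → x ∈ T := fun hi hne hx hx₀ =>
    mem_union_right _ (mem_sdiff.mpr ⟨mem_biUnion.mpr ⟨_, mem_erase.mpr ⟨hne, hi⟩, hx⟩, hx₀⟩)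
  have hTi₀ : T ∩ reduced S ξ i₀ = I ∩ reduced S ξ i₀ := by
    refine (union_inter_distrib_right _ _ _).trans (union_eq_left.mpr fun x hx => ?_)
    obtain ⟨hx, hxr⟩ := mem_inter.mp hx
    exact ((mem_sdiff.mp hx).2 (reduced_subset i₀ hxr)).elim
  have hi₀ : (T ∩ reduced S ξ i₀).card = capacity B ξ r d T i₀ := by
    refine hTi₀ ▸ hf.card_inter_reduced_eq_capacity hA hd hdi₀ hI hIr subset_union_left
      fun j hj hjT => ?_
    exact (mem_union.mp hjT).resolve_right fun h => (mem_sdiff.mp h).2 (hf.xi_mem hj)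
  obtain ⟨T', htr⟩ := hf.exists_isTruncation (capacity B ξ r d T) T
  have hfull : ∀ i ∈ J, capacity B ξ r d T i ≤ (T ∩ reduced S ξ i).card := by
    intro i hi
    obtain rfl | hne := eq_or_ne i i₀
    · exact hi₀.ge
    have hrT : reduced S ξ i ⊆ T := fun x hx =>
      hmemT hi hne (reduced_subset i hx) (disjoint_left.mp (hf.disjoint_reduced hne) hx)
    rw [inter_eq_right.mpr hrT]
    have := hf.le_card_reduced_add_one hA i
    have : capacity B ξ r d T i ≤ r := capacity_le
    omega
  have hdJ : ∀ j, ∀ i ∈ J, i ∈ A j → ξ j ∉ T → d j ∈ J := by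
    intro j i hi hij hjT
    have hi₀j : i₀ ∈ A j := by
      by_contra hi₀j
      have hne : i ≠ i₀ := fun h => hi₀j (h ▸ hij)
      exact hjT (hmemT hi hne (hf.xi_mem hij) fun h => hi₀j (hf.mem_A_of_xi_mem hA h))
    exact hdi₀ j hi₀j ▸ hi₀J
  have hcover := hf.card_biUnion_le_of_isTruncation hA hd htr hfull hdJ
  rw [hJm] at hcover
  have := hJ J hJm
  exact ⟨T', hf.isCore_of_isTruncation hA hr hd htr, by omega,
    htr.superset_of_card_inter_reduced_le subset_union_left hI hi₀.le⟩

end Truncation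

/-- Lemma `core-form`: let `S = {S_1,…,S_t}` be an `(A,Ψ)`-frame over `[n]`
with `t ≥ ⌈k/r⌉` and `|∪_{i∈J} S_i| ≥ k + ⌈k/r⌉(δ-1)` for every `J ⊆ [t]` of size
`⌈k/r⌉`. Then (1) every `T ⊆ [n]` with `|T| ≥ k + (⌈k/r⌉-1)(δ-1)` contains an
`(S,r,k)`-core, and (2) for every `i ∈ [t]` and every `r`-subset `I ⊆ S_i` there is an
`(S,r,k)`-core containing `I`. -/
theorem statement14 {n t a k r δ : ℕ} (hr1 : 1 ≤ r) (hδ : 2 ≤ δ) (hk1 : 1 ≤ k)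
    (hrk : r ≤ k)
    (S : Fin t → Finset (Fin n)) (A : Fin a → Finset (Fin t)) (B : Finset (Fin t))
    (ξ : Fin a → Fin n) (hframe : IsFrame r δ S A B ξ)
    (ht : (k + r - 1) / r ≤ t)
    (hJ : ∀ J : Finset (Fin t), J.card = (k + r - 1) / r →
      k + ((k + r - 1) / r) * (δ - 1) ≤ (J.biUnion S).card) :
    (∀ T : Finset (Fin n), k + ((k + r - 1) / r - 1) * (δ - 1) ≤ T.card →
      ∃ T' ⊆ T, IsCore S A B ξ r T' ∧ T'.card = k) ∧
    (∀ i : Fin t, ∀ I ⊆ S i, I.card = r →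
      ∃ T' : Finset (Fin n), IsCore S A B ξ r T' ∧ T'.card = k ∧ I ⊆ T') := by
  have hm : 1 ≤ (k + r - 1) / r := (Nat.le_div_iff_mul_le hr1).mpr (by omega)
  have hn : 1 < n := by
    obtain ⟨J, -, hJm⟩ := exists_subset_card_eq (s := (univ : Finset (Fin t))) (by simpa using ht)
    have h₁ := hJ J hJm
    have h₂ := (card_le_univ (J.biUnion S)).trans_eq (Fintype.card_fin n)
    have h₃ := Nat.mul_le_mul hm (show 1 ≤ δ - 1 by omega)
    omega
  have hA := hframe.nonempty_A hn
  refine ⟨fun T hT => ?_, fun i I hI hIr => ?_⟩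
  · obtain ⟨T', hT'T, hcore, hk⟩ := hframe.exists_isCore_subset_le_card hA hr1
      (fun J => hframe.add_mul_le_card_biUnion hA hr1 hJ) hT
    obtain ⟨T'', hT''T', hcard⟩ := exists_subset_card_eq hk
    exact ⟨T'', hT''T'.trans hT'T, hcore.mono hframe hA hT''T', hcard⟩
  · obtain ⟨T', hcore, hk, hIT'⟩ :=
      hframe.exists_isCore_superset_le_card hA hr1 hδ hm ht hJ hI hIr
    obtain ⟨T'', hIT'', hT''T', hcard⟩ := exists_subsuperset_card_eq hIT' (hIr.trans_le hrk) hk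
    exact ⟨T'', hcore.mono hframe hA hT''T', hcard, hIT''⟩
end

section
/- Let S = {S_1,...,S_t} be an (A,Ψ)-frame over [n] (with parameters r ≥ 1, δ ≥ 2, partition {A_1,...,A_α, B} of [t], and Ψ = {ξ_1,...,ξ_α} ⊆ [n]), and let k ≥ 1. For each j ∈ {1,...,α} and i ∈ A_j fix an r-element subset U_i ⊆ S_i with ξ_j ∈ U_i; for each i ∈ B fix an r-element subset U_i ⊆ S_i; set Ω_0 = ∪_{i∈[t]} U_i. Suppose Ω_0 ⊆ Ω ⊆ [n], S_0 ⊆ Ω, i ∈ [t], and λ ∈ S_i \ Ω are such that S_0 ∪ {λ} is an (S,r,k)-core. Then there exists η ∈ S_i ∩ Ω such that S_0 ∪ {η} is an (S,r,k)-core. -/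
/-- Any element lying in two distinct sets of a frame is the ξ of a common block. -/
lemma frame_mem_two {n t a r δ : ℕ} {S : Fin t → Finset (Fin n)}
    {A : Fin a → Finset (Fin t)} {B : Finset (Fin t)} {ξ : Fin a → Fin n}
    (h : IsFrame r δ S A B ξ) {x : Fin n} {i₁ i₂ : Fin t} (h12 : i₁ ≠ i₂)
    (h1 : x ∈ S i₁) (h2 : x ∈ S i₂) : ∃ j, i₁ ∈ A j ∧ i₂ ∈ A j ∧ x = ξ j := by
  obtain ⟨-, hAA, hAB, hpart, hξ, hdisj, hBU, hUB, hBB, -⟩ := h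
  have mem1 : i₁ ∈ Finset.univ.biUnion A ∪ B := by rw [hpart]; exact Finset.mem_univ _
  have mem2 : i₂ ∈ Finset.univ.biUnion A ∪ B := by rw [hpart]; exact Finset.mem_univ _
  rcases Finset.mem_union.1 mem1 with m1 | m1
  · obtain ⟨j₁, -, hj₁⟩ := Finset.mem_biUnion.1 m1
    rcases Finset.mem_union.1 mem2 with m2 | m2
    · obtain ⟨j₂, -, hj₂⟩ := Finset.mem_biUnion.1 m2
      by_cases hj : j₁ = j₂
      · subst hj
        refine ⟨j₁, hj₁, hj₂, ?_⟩
        by_contra hx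
        exact Finset.disjoint_left.1 (hdisj j₁ i₁ hj₁ i₂ hj₂ h12)
          (Finset.mem_sdiff.2 ⟨h1, by simpa using hx⟩)
          (Finset.mem_sdiff.2 ⟨h2, by simpa using hx⟩)
      · exact absurd (Finset.mem_biUnion.2 ⟨i₂, hj₂, h2⟩)
          (Finset.disjoint_left.1 (hBU j₁ j₂ hj) (Finset.mem_biUnion.2 ⟨i₁, hj₁, h1⟩))
    · exact absurd h2
        (Finset.disjoint_left.1 (hUB j₁ i₂ m2) (Finset.mem_biUnion.2 ⟨i₁, hj₁, h1⟩))
  · rcases Finset.mem_union.1 mem2 with m2 | m2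
    · obtain ⟨j₂, -, hj₂⟩ := Finset.mem_biUnion.1 m2
      exact absurd h1
        (Finset.disjoint_left.1 (hUB j₂ i₁ m1) (Finset.mem_biUnion.2 ⟨i₂, hj₂, h2⟩))
    · exact absurd h2 (Finset.disjoint_left.1 (hBB i₁ m1 i₂ m2 h12) h1)

/-- Substitution lemma: replacing `lam` by `η`, both in `S i` only (not any `ξ j`),
preserves the core property. -/
lemma core_subst {n t a r δ : ℕ} {S : Fin t → Finset (Fin n)}
    {A : Fin a → Finset (Fin t)} {B : Finset (Fin t)} {ξ : Fin a → Fin n}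
    (hframe : IsFrame r δ S A B ξ) {S₀ : Finset (Fin n)} {i : Fin t} {lam η : Fin n}
    (hLi : lam ∈ S i) (hηi : η ∈ S i) (hLS₀ : lam ∉ S₀) (hηS₀ : η ∉ S₀)
    (hLξ : ∀ j, lam ≠ ξ j) (hηξ : ∀ j, η ≠ ξ j)
    (hcore : IsCore S A B ξ r (insert lam S₀)) :
    IsCore S A B ξ r (insert η S₀) := by
  have hLonly : ∀ ℓ, lam ∈ S ℓ → ℓ = i := by
    intro ℓ h
    by_contra hne
    obtain ⟨j, -, -, hx⟩ := frame_mem_two hframe hne h hLi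
    exact hLξ j hx
  have hηonly : ∀ ℓ, η ∈ S ℓ → ℓ = i := by
    intro ℓ h
    by_contra hne
    obtain ⟨j, -, -, hx⟩ := frame_mem_two hframe hne h hηi
    exact hηξ j hx
  have hcard : ∀ ℓ, ((insert η S₀) ∩ S ℓ).card = ((insert lam S₀) ∩ S ℓ).card := by
    intro ℓ
    by_cases hli : ℓ = i
    · subst hli
      rw [Finset.insert_inter_of_mem hηi, Finset.insert_inter_of_mem hLi,
        Finset.card_insert_of_notMem (fun h => hηS₀ (Finset.mem_inter.1 h).1),
        Finset.card_insert_of_notMem (fun h => hLS₀ (Finset.mem_inter.1 h).1)]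
    · rw [Finset.insert_inter_of_notMem (fun h => hli (hηonly ℓ h)),
        Finset.insert_inter_of_notMem (fun h => hli (hLonly ℓ h))]
  have hmem : ∀ j, (ξ j ∈ insert η S₀ ↔ ξ j ∈ insert lam S₀) := by
    intro j
    simp [Finset.mem_insert, Ne.symm (hηξ j), Ne.symm (hLξ j)]
  refine ⟨?_, ?_, ?_⟩
  · intro j hj ℓ hℓ
    rw [hcard]
    exact hcore.1 j ((hmem j).1 hj) ℓ hℓ
  · intro j hj
    obtain ⟨w, hw, h1, h2⟩ := hcore.2.1 j (fun h => hj ((hmem j).2 h))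
    exact ⟨w, hw, by rw [hcard]; exact h1,
      fun ℓ hℓ hℓw => by rw [hcard]; exact h2 ℓ hℓ hℓw⟩
  · intro ℓ hℓ
    rw [hcard]
    exact hcore.2.2 ℓ hℓ

/-- Lemma `core-exist`: with `Ω_0 = ∪_{i∈[t]} U_i` built from `r`-subsets
`U_i ⊆ S_i` (with `ξ_j ∈ U_i` for `i ∈ A_j`), if `Ω_0 ⊆ Ω ⊆ [n]`, `S_0 ⊆ Ω`, `i ∈ [t]`,
`λ ∈ S_i \ Ω` and `S_0 ∪ {λ}` is an `(S,r,k)`-core, then there exists `η ∈ S_i ∩ Ω`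
such that `S_0 ∪ {η}` is an `(S,r,k)`-core. -/
theorem statement15 {n t a k r δ : ℕ} (hr1 : 1 ≤ r) (hδ : 2 ≤ δ) (hk1 : 1 ≤ k)
    (S : Fin t → Finset (Fin n)) (A : Fin a → Finset (Fin t)) (B : Finset (Fin t))
    (ξ : Fin a → Fin n) (hframe : IsFrame r δ S A B ξ)
    (U : Fin t → Finset (Fin n))
    (hUsub : ∀ i : Fin t, U i ⊆ S i) (hUcard : ∀ i : Fin t, (U i).card = r)
    (hUξ : ∀ j : Fin a, ∀ i ∈ A j, ξ j ∈ U i)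
    (Ω : Finset (Fin n)) (hΩ : Finset.univ.biUnion U ⊆ Ω)
    (S₀ : Finset (Fin n)) (hS₀ : S₀ ⊆ Ω)
    (i : Fin t) (lam : Fin n) (hlam : lam ∈ S i \ Ω)
    (hcore : IsCore S A B ξ r (insert lam S₀)) (hcardk : (insert lam S₀).card = k) :
    ∃ η ∈ S i ∩ Ω, IsCore S A B ξ r (insert η S₀) ∧ (insert η S₀).card = k := by
  obtain ⟨hcards, hAA, hAB, hpart, hξiff, hdisjS, hBU, hUB, hBB, hcover⟩ := id hframe
  obtain ⟨hLSi, hLΩ⟩ := Finset.mem_sdiff.1 hlam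
  have hLS₀ : lam ∉ S₀ := fun h => hLΩ (hS₀ h)
  have hUΩ : ∀ ℓ : Fin t, U ℓ ⊆ Ω := fun ℓ x hx =>
    hΩ (Finset.mem_biUnion.2 ⟨ℓ, Finset.mem_univ _, hx⟩)
  have hUine : (U i).Nonempty := Finset.card_pos.mp (by rw [hUcard]; omega)
  have hξS : ∀ j, ∀ ℓ ∈ A j, ξ j ∈ S ℓ := fun j => (hξiff j (ξ j)).2 rfl
  have hAne : ∀ j, (A j).Nonempty := by
    intro j
    rw [Finset.nonempty_iff_ne_empty]
    intro hA
    have h1 : lam = ξ j := (hξiff j lam).1 (by intro ℓ hℓ; rw [hA] at hℓ; simp at hℓ)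
    obtain ⟨u, hu⟩ := hUine
    have h2 : u = ξ j := (hξiff j u).1 (by intro ℓ hℓ; rw [hA] at hℓ; simp at hℓ)
    exact hLΩ (by rw [h1, ← h2]; exact hUΩ i hu)
  have hξΩ : ∀ j, ξ j ∈ Ω := by
    intro j
    obtain ⟨ℓ, hℓ⟩ := hAne j
    exact hUΩ ℓ (hUξ j ℓ hℓ)
  have hLξ : ∀ j, lam ≠ ξ j := fun j h => hLΩ (h ▸ hξΩ j)
  have hblock : ∀ ℓ (j₁ j₂ : Fin a), ℓ ∈ A j₁ → ℓ ∈ A j₂ → j₁ = j₂ := by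
    intro ℓ j₁ j₂ h1 h2
    by_contra hne
    exact Finset.disjoint_left.1 (hAA j₁ j₂ hne) h1 h2
  have hξonly : ∀ (j' : Fin a) ℓ, ξ j' ∈ S ℓ → ℓ ∈ A j' := by
    intro j' ℓ h
    by_contra hℓ
    obtain ⟨m, hm⟩ := hAne j'
    have hne : m ≠ ℓ := fun e => hℓ (e ▸ hm)
    obtain ⟨j'', hm'', hℓ'', -⟩ := frame_mem_two hframe hne (hξS j' m hm) h
    rw [hblock m j'' j' hm'' hm] at hℓ''
    exact hℓ hℓ''
  have hLonly : ∀ ℓ, lam ∈ S ℓ → ℓ = i := by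
    intro ℓ h
    by_contra hne
    obtain ⟨j, -, -, hx⟩ := frame_mem_two hframe hne h hLSi
    exact hLξ j hx
  have hcardS₀ : S₀.card + 1 = k := by
    rw [← hcardk, Finset.card_insert_of_notMem hLS₀]
  have hi : i ∈ Finset.univ.biUnion A ∪ B := by rw [hpart]; exact Finset.mem_univ _
  rcases Finset.mem_union.1 hi with hiA | hiB
  · -- i belongs to a block A j
    obtain ⟨j, -, hij⟩ := Finset.mem_biUnion.1 hiA
    have hξji : ξ j ∈ S i := hξS j i hij
    have hξ'notSi : ∀ j', j' ≠ j → ξ j' ∉ S i := fun j' hne h =>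
      hne (hblock i j' j (hξonly j' i h) hij)
    by_cases hξ0 : ξ j ∈ S₀
    · -- substitution with some η ∈ U i \ S₀
      have h1 := hcore.1 j (Finset.mem_insert_of_mem hξ0) i hij
      rw [Finset.insert_inter_of_mem hLSi,
        Finset.card_insert_of_notMem (fun h => hLS₀ (Finset.mem_inter.1 h).1)] at h1
      have hex : (U i \ S₀).Nonempty := by
        rw [Finset.sdiff_nonempty]
        intro hsub
        have hsub2 : U i ⊆ S₀ ∩ S i := fun x hx => Finset.mem_inter.2 ⟨hsub hx, hUsub i hx⟩
        have := Finset.card_le_card hsub2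
        rw [hUcard] at this
        omega
      obtain ⟨η, hη⟩ := hex
      obtain ⟨hηU, hηS₀⟩ := Finset.mem_sdiff.1 hη
      have hηSi : η ∈ S i := hUsub i hηU
      have hηξ : ∀ j', η ≠ ξ j' := by
        intro j' he
        by_cases hjj : j' = j
        · subst hjj; exact hηS₀ (he ▸ hξ0)
        · exact hξ'notSi j' hjj (he ▸ hηSi)
      exact ⟨η, Finset.mem_inter.2 ⟨hηSi, hUΩ i hηU⟩,
        core_subst hframe hLSi hηSi hLS₀ hηS₀ hLξ hηξ hcore,
        by rw [Finset.card_insert_of_notMem hηS₀]; exact hcardS₀⟩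
    · -- ξ j ∉ S₀, hence ξ j ∉ insert lam S₀
      have hξT₁ : ξ j ∉ insert lam S₀ := by
        intro h
        rcases Finset.mem_insert.1 h with h | h
        · exact hLξ j h.symm
        · exact hξ0 h
      obtain ⟨ij, hijA, hij1, hij2⟩ := hcore.2.1 j hξT₁
      by_cases hii : i = ij
      · -- take η = ξ j
        subst hii
        have hEq : ∀ ℓ, ℓ ∉ A j →
            (insert (ξ j) S₀) ∩ S ℓ = (insert lam S₀) ∩ S ℓ := by
          intro ℓ hℓ
          have hLℓ : lam ∉ S ℓ := fun h => hℓ (by rw [hLonly ℓ h]; exact hij)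
          have hξℓ : ξ j ∉ S ℓ := fun h => hℓ (hξonly j ℓ h)
          rw [Finset.insert_inter_of_notMem hξℓ, Finset.insert_inter_of_notMem hLℓ]
        refine ⟨ξ j, Finset.mem_inter.2 ⟨hξji, hξΩ j⟩, ⟨?_, ?_, ?_⟩, ?_⟩
        · -- condition (i)
          intro j' hj' ℓ hℓ
          by_cases hjj : j' = j
          · subst hjj
            rw [Finset.insert_inter_of_mem (hξS j' ℓ hℓ),
              Finset.card_insert_of_notMem (fun h => hξ0 (Finset.mem_inter.1 h).1)]
            by_cases hli : ℓ = i
            · subst hli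
              rw [Finset.insert_inter_of_mem hLSi,
                Finset.card_insert_of_notMem
                  (fun h => hLS₀ (Finset.mem_inter.1 h).1)] at hij1
              exact hij1
            · have h2 := hij2 ℓ hℓ hli
              rw [Finset.insert_inter_of_notMem
                (fun h => hli (hLonly ℓ h))] at h2
              omega
          · have hξ'0 : ξ j' ∈ S₀ := by
              rcases Finset.mem_insert.1 hj' with h | h
              · exact absurd (h ▸ hξji) (hξ'notSi j' hjj)
              · exact h
            have hℓnA : ℓ ∉ A j := fun h => hjj (hblock ℓ j' j hℓ h)
            rw [hEq ℓ hℓnA]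
            exact hcore.1 j' (Finset.mem_insert_of_mem hξ'0) ℓ hℓ
        · -- condition (ii)
          intro j' hj'
          have hjj : j' ≠ j := fun e => hj' (e ▸ Finset.mem_insert_self _ _)
          have hξ'T₁ : ξ j' ∉ insert lam S₀ := by
            intro h
            rcases Finset.mem_insert.1 h with h | h
            · exact hLξ j' h.symm
            · exact hj' (Finset.mem_insert_of_mem h)
          obtain ⟨w, hw, h1, h2⟩ := hcore.2.1 j' hξ'T₁
          have hwnA : ∀ m, m ∈ A j' → m ∉ A j := fun m hm h => hjj (hblock m j' j hm h)
          refine ⟨w, hw, by rw [hEq w (hwnA w hw)]; exact h1, ?_⟩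
          intro ℓ hℓ hℓw
          rw [hEq ℓ (hwnA ℓ hℓ)]
          exact h2 ℓ hℓ hℓw
        · -- condition (iii)
          intro ℓ hℓB
          have hℓnA : ℓ ∉ A j := fun h => Finset.disjoint_left.1 (hAB j) h hℓB
          rw [hEq ℓ hℓnA]
          exact hcore.2.2 ℓ hℓB
        · rw [Finset.card_insert_of_notMem hξ0]; exact hcardS₀
      · -- i ≠ ij : substitution with η ∈ U i \ (insert (ξ j) S₀)
        have h2 := hij2 i hij hii
        rw [Finset.insert_inter_of_mem hLSi,
          Finset.card_insert_of_notMem (fun h => hLS₀ (Finset.mem_inter.1 h).1)] at h2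
        have hr2 : 2 ≤ r := by omega
        have hex : (U i \ insert (ξ j) S₀).Nonempty := by
          rw [Finset.sdiff_nonempty]
          intro hsub
          have hsub2 : U i \ {ξ j} ⊆ S₀ ∩ S i := by
            intro x hx
            obtain ⟨hx1, hx2⟩ := Finset.mem_sdiff.1 hx
            rcases Finset.mem_insert.1 (hsub hx1) with h | h
            · exact absurd h (by simpa using hx2)
            · exact Finset.mem_inter.2 ⟨h, hUsub i hx1⟩
          have hc := Finset.card_le_card hsub2
          have hc2 : (U i \ {ξ j}).card = r - 1 := by
            rw [Finset.sdiff_singleton_eq_erase, Finset.card_erase_of_mem (hUξ j i hij),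
              hUcard]
          omega
        obtain ⟨η, hη⟩ := hex
        obtain ⟨hηU, hηIns⟩ := Finset.mem_sdiff.1 hη
        have hηS₀ : η ∉ S₀ := fun h => hηIns (Finset.mem_insert_of_mem h)
        have hηnξj : η ≠ ξ j := fun h => hηIns (h ▸ Finset.mem_insert_self _ _)
        have hηSi : η ∈ S i := hUsub i hηU
        have hηξ : ∀ j', η ≠ ξ j' := by
          intro j' he
          by_cases hjj : j' = j
          · exact hηnξj (hjj ▸ he)
          · exact hξ'notSi j' hjj (he ▸ hηSi)
        exact ⟨η, Finset.mem_inter.2 ⟨hηSi, hUΩ i hηU⟩,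
          core_subst hframe hLSi hηSi hLS₀ hηS₀ hLξ hηξ hcore,
          by rw [Finset.card_insert_of_notMem hηS₀]; exact hcardS₀⟩
  · -- i ∈ B
    have h1 := hcore.2.2 i hiB
    rw [Finset.insert_inter_of_mem hLSi,
      Finset.card_insert_of_notMem (fun h => hLS₀ (Finset.mem_inter.1 h).1)] at h1
    have hξnotSi : ∀ j', ξ j' ∉ S i := fun j' h =>
      Finset.disjoint_left.1 (hAB j') (hξonly j' i h) hiB
    have hex : (U i \ S₀).Nonempty := by
      rw [Finset.sdiff_nonempty]
      intro hsub
      have hsub2 : U i ⊆ S₀ ∩ S i := fun x hx => Finset.mem_inter.2 ⟨hsub hx, hUsub i hx⟩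
      have := Finset.card_le_card hsub2
      rw [hUcard] at this
      omega
    obtain ⟨η, hη⟩ := hex
    obtain ⟨hηU, hηS₀⟩ := Finset.mem_sdiff.1 hη
    have hηSi : η ∈ S i := hUsub i hηU
    have hηξ : ∀ j', η ≠ ξ j' := fun j' he => hξnotSi j' (he ▸ hηSi)
    exact ⟨η, Finset.mem_inter.2 ⟨hηSi, hUΩ i hηU⟩,
      core_subst hframe hLSi hηSi hLS₀ hηS₀ hLξ hηξ hcore,
      by rw [Finset.card_insert_of_notMem hηS₀]; exact hcardS₀⟩
end
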